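/- arXiv:1906.07695 — 5 statements merged into one kernel-verified Lean document; each statement's English description precedes it below -/
import Mathlib

section
/- E[Y²·Φ(X)] − E[V²]·∫_{[0,1]^d} Φ(x) dx = ∫_{[0,1]^d} r(x)·Φ(x) dx. In particular, the statistic Y²·Φ(X) − E[V²]·∫Φ is an unbiased estimator of the coefficient ∫ r·Φ. (This is the content of Lemma 1 of the paper under assumption set H1, stated for a general bounded coefficient function Φ; taking Φ = Φ_{j,k} with ∫Φ_{j,k} = 2^{-jd/2} gives the paper's statement for α̂_{j,k}, and taking Φ = Ψ_{j,k,u} with ∫Ψ = 0 gives the statement for the β-coefficients.) -/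
/-!
Expanding the square, `Y² Φ(X) = f(X)² Φ(X) U² + 2 f(X) Φ(X) U V + Φ(X) V²`. Each term is a
function of `X` (or of `(X, U)`) times a function of an independent variable, so its expectation
factors: the first gives `∫ f² Φ · E[U²] = ∫ r Φ`, the cross term carries the factor
`E[U] E[V] = 0`, and the last gives `E[V²] ∫ Φ`. Boundedness of `f` and `Φ` on the cube, where
`X` lives almost surely, makes all three terms integrable.
-/

open MeasureTheory ProbabilityTheory

section

variable {Ω E : Type*} [MeasurableSpace Ω] [MeasurableSpace E] {P : Measure Ω} {X : Ω → E}

lemma ae_mem_of_map_eq_restrict {μ : Measure E} {s : Set E} (hX : Measurable X)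
    (hs : MeasurableSet s) (hXlaw : P.map X = μ.restrict s) : ∀ᵐ ω ∂P, X ω ∈ s :=
  ae_of_ae_map hX.aemeasurable (hXlaw ▸ ae_restrict_mem hs)

lemma integral_comp_eq_setIntegral_of_map_eq_restrict {μ : Measure E} {s : Set E}
    (hX : Measurable X) (hXlaw : P.map X = μ.restrict s) {g : E → ℝ} (hg : Measurable g) :
    ∫ ω, g (X ω) ∂P = ∫ x in s, g x ∂μ := by
  rw [← integral_map hX.aemeasurable hg.aestronglyMeasurable, hXlaw]

lemma ae_abs_mul_le {a b : Ω → ℝ} {Ca Cb : ℝ} (ha : ∀ᵐ ω ∂P, |a ω| ≤ Ca)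
    (hb : ∀ᵐ ω ∂P, |b ω| ≤ Cb) : ∀ᵐ ω ∂P, |a ω * b ω| ≤ Ca * Cb := by
  filter_upwards [ha, hb] with ω h₁ h₂
  rw [abs_mul]
  exact mul_le_mul h₁ h₂ (abs_nonneg _) ((abs_nonneg _).trans h₁)

lemma integral_comp_mul_mul_eq_of_indepFun {U V : Ω → ℝ} {a : E → ℝ}
    (hX : Measurable X) (ha : Measurable a)
    (hU : AEStronglyMeasurable U P) (hV : AEStronglyMeasurable V P)
    (hXU : IndepFun X U P) (hXUV : IndepFun (fun ω => (X ω, U ω)) V P) :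
    ∫ ω, a (X ω) * (U ω * V ω) ∂P
      = (∫ ω, a (X ω) ∂P) * (∫ ω, U ω ∂P) * ∫ ω, V ω ∂P := by
  have haX : Measurable fun ω => a (X ω) := ha.comp hX
  have haXU_V :
      ∫ ω, a (X ω) * U ω * V ω ∂P = (∫ ω, a (X ω) * U ω ∂P) * ∫ ω, V ω ∂P :=
    (hXUV.comp (by fun_prop : Measurable fun p : E × ℝ => a p.1 * p.2)
      measurable_id).integral_fun_mul_eq_mul_integral (haX.aestronglyMeasurable.mul hU) hV
  have haX_U : ∫ ω, a (X ω) * U ω ∂P = (∫ ω, a (X ω) ∂P) * ∫ ω, U ω ∂P :=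
    (hXU.comp ha measurable_id).integral_fun_mul_eq_mul_integral haX.aestronglyMeasurable hU
  simp_rw [← mul_assoc, haXU_V, haX_U]

theorem integral_sq_mul_eq_of_indepFun {U V : Ω → ℝ} {g φ : E → ℝ} {Cg Cφ : ℝ}
    (hX : Measurable X) (hg : Measurable g) (hφ : Measurable φ)
    (hgC : ∀ᵐ ω ∂P, |g (X ω)| ≤ Cg) (hφC : ∀ᵐ ω ∂P, |φ (X ω)| ≤ Cφ)
    (hU : MemLp U 2 P) (hV : MemLp V 2 P)
    (hXU : IndepFun X U P) (hXUV : IndepFun (fun ω => (X ω, U ω)) V P) :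
    ∫ ω, (g (X ω) * U ω + V ω) ^ 2 * φ (X ω) ∂P
      = (∫ ω, g (X ω) ^ 2 * φ (X ω) ∂P) * (∫ ω, U ω ^ 2 ∂P)
        + 2 * ((∫ ω, g (X ω) * φ (X ω) ∂P) * (∫ ω, U ω ∂P) * ∫ ω, V ω ∂P)
        + (∫ ω, φ (X ω) ∂P) * ∫ ω, V ω ^ 2 ∂P := by
  have hφX : Measurable fun ω => φ (X ω) := hφ.comp hX
  have hgφC := ae_abs_mul_le hgC hφC
  have hggφC : ∀ᵐ ω ∂P, |g (X ω) ^ 2 * φ (X ω)| ≤ Cg * (Cg * Cφ) := by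
    simpa only [sq, mul_assoc] using ae_abs_mul_le hgC hgφC
  have int₁ : Integrable (fun ω => g (X ω) ^ 2 * φ (X ω) * U ω ^ 2) P :=
    hU.integrable_sq.bdd_mul (by fun_prop) hggφC
  have int₂ : Integrable (fun ω => 2 * (g (X ω) * φ (X ω) * (U ω * V ω))) P :=
    ((hU.integrable_mul hV).bdd_mul (by fun_prop) hgφC).const_mul 2
  have int₁₂ : Integrable (fun ω => g (X ω) ^ 2 * φ (X ω) * U ω ^ 2
      + 2 * (g (X ω) * φ (X ω) * (U ω * V ω))) P := int₁.add int₂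
  have int₃ : Integrable (fun ω => φ (X ω) * V ω ^ 2) P :=
    hV.integrable_sq.bdd_mul hφX.aestronglyMeasurable hφC
  have term₁ : ∫ ω, g (X ω) ^ 2 * φ (X ω) * U ω ^ 2 ∂P
      = (∫ ω, g (X ω) ^ 2 * φ (X ω) ∂P) * ∫ ω, U ω ^ 2 ∂P :=
    (hXU.comp (by fun_prop : Measurable fun x => g x ^ 2 * φ x)
      (by fun_prop : Measurable fun u : ℝ => u ^ 2)).integral_fun_mul_eq_mul_integral
      (by fun_prop) hU.integrable_sq.aestronglyMeasurable
  have term₂ : ∫ ω, g (X ω) * φ (X ω) * (U ω * V ω) ∂P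
      = (∫ ω, g (X ω) * φ (X ω) ∂P) * (∫ ω, U ω ∂P) * ∫ ω, V ω ∂P :=
    integral_comp_mul_mul_eq_of_indepFun (a := fun x => g x * φ x) hX (by fun_prop)
      hU.aestronglyMeasurable hV.aestronglyMeasurable hXU hXUV
  have term₃ :
      ∫ ω, φ (X ω) * V ω ^ 2 ∂P = (∫ ω, φ (X ω) ∂P) * ∫ ω, V ω ^ 2 ∂P :=
    (hXUV.comp (by fun_prop : Measurable fun p : E × ℝ => φ p.1)
      (by fun_prop : Measurable fun v : ℝ => v ^ 2)).integral_fun_mul_eq_mul_integral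
      hφX.aestronglyMeasurable hV.integrable_sq.aestronglyMeasurable
  calc ∫ ω, (g (X ω) * U ω + V ω) ^ 2 * φ (X ω) ∂P
      = ∫ ω, g (X ω) ^ 2 * φ (X ω) * U ω ^ 2 + 2 * (g (X ω) * φ (X ω) * (U ω * V ω))
          + φ (X ω) * V ω ^ 2 ∂P := by
        congr 1; ext ω; ring
    _ = _ := by
        rw [integral_add int₁₂ int₃, integral_add int₁ int₂, integral_const_mul,
          term₁, term₂, term₃]

end

theorem unbiased_coefficient_H1_general
    {Ω : Type*} [MeasurableSpace Ω] (P : Measure Ω)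
    (d : ℕ)
    (X : Ω → (Fin d → ℝ)) (U V : Ω → ℝ)
    (hXm : Measurable X) (hUm : Measurable U) (hVm : Measurable V)
    -- X is uniformly distributed on the cube [0,1]^d
    (hXlaw : Measure.map X P = volume.restrict (Set.Icc (0 : Fin d → ℝ) 1))
    -- E[V²] < ∞
    (hV2 : Integrable (fun ω => (V ω) ^ 2) P)
    -- X, U, V mutually independent
    (hXU : IndepFun X U P)
    (hXUV : IndepFun (fun ω => (X ω, U ω)) V P)
    -- f bounded measurable on the cube, Y = f(X)·U + V, r = f²
    (f : (Fin d → ℝ) → ℝ) (hfm : Measurable f)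
    (Cf : ℝ) (hf : ∀ x ∈ Set.Icc (0 : Fin d → ℝ) 1, |f x| ≤ Cf)
    (Y : Ω → ℝ) (hY : ∀ ω, Y ω = f (X ω) * U ω + V ω)
    (r : (Fin d → ℝ) → ℝ) (hr : ∀ x, r x = (f x) ^ 2)
    -- E[U²] = 1 and (E[U] = 0 or E[V] = 0)
    (hU2int : Integrable (fun ω => (U ω) ^ 2) P)
    (hU2 : ∫ ω, (U ω) ^ 2 ∂P = 1)
    (hcent : (∫ ω, U ω ∂P = 0) ∨ (∫ ω, V ω ∂P = 0))
    -- Φ bounded measurable on the cube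
    (Φ : (Fin d → ℝ) → ℝ) (hΦm : Measurable Φ)
    (CΦ : ℝ) (hΦ : ∀ x ∈ Set.Icc (0 : Fin d → ℝ) 1, |Φ x| ≤ CΦ) :
    (∫ ω, (Y ω) ^ 2 * Φ (X ω) ∂P)
        - (∫ ω, (V ω) ^ 2 ∂P) * (∫ x in Set.Icc (0 : Fin d → ℝ) 1, Φ x)
      = ∫ x in Set.Icc (0 : Fin d → ℝ) 1, r x * Φ x := by
  have hXcube := ae_mem_of_map_eq_restrict hXm measurableSet_Icc hXlaw
  have hU : MemLp U 2 P := (memLp_two_iff_integrable_sq hUm.aestronglyMeasurable).2 hU2int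
  have hV : MemLp V 2 P := (memLp_two_iff_integrable_sq hVm.aestronglyMeasurable).2 hV2
  simp_rw [hY, hr]
  rw [integral_sq_mul_eq_of_indepFun hXm hfm hΦm (hXcube.mono fun ω h => hf _ h)
      (hXcube.mono fun ω h => hΦ _ h) hU hV hXU hXUV,
    integral_comp_eq_setIntegral_of_map_eq_restrict hXm hXlaw
      (by fun_prop : Measurable fun x => f x ^ 2 * Φ x),
    integral_comp_eq_setIntegral_of_map_eq_restrict hXm hXlaw hΦm, hU2]
  rcases hcent with h | h <;> rw [h] <;> ring

/-- Lemma 1 of the paper, assumption set H1.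
`E[Y² Φ(X)] − E[V²] ∫_{[0,1]^d} Φ = ∫_{[0,1]^d} r Φ`, i.e. the statistic
`Y² Φ(X) − E[V²] ∫ Φ` is an unbiased estimator of the wavelet-type
coefficient `∫ r Φ`. -/
theorem unbiased_coefficient_H1
    {Ω : Type*} [MeasurableSpace Ω] (P : Measure Ω) [IsProbabilityMeasure P]
    (d : ℕ) (hd : 1 ≤ d)
    (X : Ω → (Fin d → ℝ)) (U V : Ω → ℝ)
    (hXm : Measurable X) (hUm : Measurable U) (hVm : Measurable V)
    -- X is uniformly distributed on the cube [0,1]^d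
    (hXlaw : Measure.map X P = volume.restrict (Set.Icc (0 : Fin d → ℝ) 1))
    -- E[V²] < ∞
    (hV2 : Integrable (fun ω => (V ω) ^ 2) P)
    -- X, U, V mutually independent
    (hXU : IndepFun X U P)
    (hXUV : IndepFun (fun ω => (X ω, U ω)) V P)
    -- f bounded measurable on the cube, Y = f(X)·U + V, r = f²
    (f : (Fin d → ℝ) → ℝ) (hfm : Measurable f)
    (Cf : ℝ) (hf : ∀ x ∈ Set.Icc (0 : Fin d → ℝ) 1, |f x| ≤ Cf)
    (Y : Ω → ℝ) (hY : ∀ ω, Y ω = f (X ω) * U ω + V ω)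
    (r : (Fin d → ℝ) → ℝ) (hr : ∀ x, r x = (f x) ^ 2)
    -- E[U²] = 1 and (E[U] = 0 or E[V] = 0)
    (hU2int : Integrable (fun ω => (U ω) ^ 2) P)
    (hU2 : ∫ ω, (U ω) ^ 2 ∂P = 1)
    (hcent : (∫ ω, U ω ∂P = 0) ∨ (∫ ω, V ω ∂P = 0))
    -- Φ bounded measurable on the cube
    (Φ : (Fin d → ℝ) → ℝ) (hΦm : Measurable Φ)
    (CΦ : ℝ) (hΦ : ∀ x ∈ Set.Icc (0 : Fin d → ℝ) 1, |Φ x| ≤ CΦ) :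
    (∫ ω, (Y ω) ^ 2 * Φ (X ω) ∂P)
        - (∫ ω, (V ω) ^ 2 ∂P) * (∫ x in Set.Icc (0 : Fin d → ℝ) 1, Φ x)
      = ∫ x in Set.Icc (0 : Fin d → ℝ) 1, r x * Φ x :=
  unbiased_coefficient_H1_general P d X U V hXm hUm hVm hXlaw hV2 hXU hXUV f hfm Cf hf Y hY r hr
    hU2int hU2 hcent Φ hΦm CΦ hΦ
end

section
/- Let α := ∫_{[0,1]^d} r(x)·Φ(x) dx and define the estimator α̂ := (1/n)·Σ_{i=1}^n Y_i²·Φ(X_i) − E[V²]·∫_{[0,1]^d} Φ(x) dx. Then E[(α̂ − α)²] ≤ 8·(E[U⁴]·‖f‖_∞⁴ + E[V⁴])·(∫_{[0,1]^d} Φ(x)² dx)/n. (This is the first inequality of Lemma 2 of the paper under assumption set H1, stated for a general bounded coefficient function Φ.) -/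
open MeasureTheory ProbabilityTheory

/-! The summands `Wᵢ = Yᵢ² Φ(Xᵢ)` are i.i.d. with mean `α + E[V²] ∫ Φ`: expanding the square,
the cross term `2 f(X) Φ(X) U V` has expectation `2 (∫ f Φ) E[U] E[V] = 0` by independence.
Hence `α̂ - α` is a centred empirical mean, whose second moment is `Var(W)/n ≤ E[W²]/n`.
Finally `W² = (f(X) U + V)⁴ Φ(X)² ≤ 8 (‖f‖∞⁴ U⁴ + V⁴) Φ(X)²`, and the expectation of the right-hand
side factorises because `X` is independent of `U` and of `V`. -/

lemma add_pow_four_le (a b : ℝ) : (a + b) ^ 4 ≤ 8 * (a ^ 4 + b ^ 4) := by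
  nlinarith [sq_nonneg (a - b), sq_nonneg (a + b), sq_nonneg (a ^ 2 - b ^ 2)]

lemma integrable_sq_of_integrable_pow_four {α : Type*} {m : MeasurableSpace α} {μ : Measure α}
    [IsFiniteMeasure μ] {f : α → ℝ} (hf : AEStronglyMeasurable f μ)
    (h4 : Integrable (fun x => f x ^ 4) μ) : Integrable (fun x => f x ^ 2) μ := by
  have h4' : Integrable (fun x => ‖f x‖ ^ 4) μ := by
    simpa only [Real.norm_eq_abs, Even.pow_abs (by decide : Even 4)] using h4
  simpa only [Real.norm_eq_abs, sq_abs] using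
    integrable_norm_pow_of_le hf (p := 2) (by norm_num) h4'

namespace ProbabilityTheory

variable {Ω E F : Type*} {mΩ : MeasurableSpace Ω} {mE : MeasurableSpace E}
  {mF : MeasurableSpace F} {P : Measure Ω} {μ : Measure E} {X : Ω → E}

lemma HasLaw.integral_comp_mul_comp_of_indepFun {Y : Ω → F} {φ : E → ℝ} {ψ : F → ℝ}
    (hX : HasLaw X μ P) (hY : AEMeasurable Y P) (hXY : IndepFun X Y P)
    (hφ : AEStronglyMeasurable φ μ) (hψ : AEStronglyMeasurable ψ (P.map Y)) :
    ∫ ω, φ (X ω) * ψ (Y ω) ∂P = (∫ x, φ x ∂μ) * ∫ ω, ψ (Y ω) ∂P := by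
  rw [hXY.integral_fun_comp_mul_comp hX.aemeasurable hY (hX.map_eq ▸ hφ) hψ,
    ← hX.integral_comp hφ, Function.comp_def]

lemma HasLaw.integrable_comp_mul {Y : Ω → ℝ} {φ : E → ℝ} {C : ℝ} (hX : HasLaw X μ P)
    (hφ : AEStronglyMeasurable φ μ) (hφC : ∀ᵐ x ∂μ, |φ x| ≤ C) (hY : Integrable Y P) :
    Integrable (fun ω => φ (X ω) * Y ω) P := by
  rw [← hX.map_eq] at hφ hφC
  exact hY.bdd_mul (hφ.comp_aemeasurable hX.aemeasurable) (ae_of_ae_map hX.aemeasurable hφC)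

variable {U V : Ω → ℝ} {f Φ : E → ℝ}

lemma integral_sq_response_mul_eq (hX : HasLaw X μ P) (hXU : IndepFun X U P)
    (hXUV : IndepFun (fun ω => (X ω, U ω)) V P)
    (hU2 : MemLp U 2 P) (hV2 : MemLp V 2 P) (hf : Measurable f) (hΦ : Measurable Φ)
    {M C : ℝ} (hfM : ∀ᵐ x ∂μ, |f x| ≤ M) (hΦC : ∀ᵐ x ∂μ, |Φ x| ≤ C) :
    ∫ ω, (f (X ω) * U ω + V ω) ^ 2 * Φ (X ω) ∂P
      = (∫ x, f x ^ 2 * Φ x ∂μ) * (∫ ω, U ω ^ 2 ∂P)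
        + 2 * (∫ x, f x * Φ x ∂μ) * ((∫ ω, U ω ∂P) * ∫ ω, V ω ∂P)
        + (∫ x, Φ x ∂μ) * ∫ ω, V ω ^ 2 ∂P := by
  have hU : AEMeasurable U P := hU2.aestronglyMeasurable.aemeasurable
  have hV : AEMeasurable V P := hV2.aestronglyMeasurable.aemeasurable
  have hXV : IndepFun X V P := hXUV.comp measurable_fst measurable_id
  have hfΦ : Measurable fun x => f x * Φ x := hf.mul hΦ
  have hf2Φ : Measurable fun x => f x ^ 2 * Φ x := (hf.pow_const 2).mul hΦ
  have hint₁ : Integrable (fun ω => f (X ω) ^ 2 * Φ (X ω) * U ω ^ 2) P := by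
    refine hX.integrable_comp_mul hf2Φ.aestronglyMeasurable (C := M ^ 2 * C) ?_
      hU2.integrable_sq
    filter_upwards [hfM, hΦC] with x hfx hΦx
    rw [abs_mul, abs_pow]
    exact mul_le_mul (pow_le_pow_left₀ (abs_nonneg _) hfx 2) hΦx (abs_nonneg _) (by positivity)
  have hint₂ : Integrable (fun ω => f (X ω) * Φ (X ω) * (U ω * V ω)) P := by
    refine hX.integrable_comp_mul hfΦ.aestronglyMeasurable (C := M * C) ?_
      (hU2.integrable_mul hV2)
    filter_upwards [hfM, hΦC] with x hfx hΦx
    rw [abs_mul]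
    exact mul_le_mul hfx hΦx (abs_nonneg _) ((abs_nonneg _).trans hfx)
  have hint₃ : Integrable (fun ω => Φ (X ω) * V ω ^ 2) P :=
    hX.integrable_comp_mul hΦ.aestronglyMeasurable hΦC hV2.integrable_sq
  have hcross : ∫ ω, f (X ω) * Φ (X ω) * (U ω * V ω) ∂P
      = (∫ x, f x * Φ x ∂μ) * ((∫ ω, U ω ∂P) * ∫ ω, V ω ∂P) := by
    have hXUm : AEMeasurable (fun ω => (X ω, U ω)) P := hX.aemeasurable.prodMk hU
    calc ∫ ω, f (X ω) * Φ (X ω) * (U ω * V ω) ∂P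
        = ∫ ω, (fun p : E × ℝ => f p.1 * Φ p.1 * p.2) (X ω, U ω) * id (V ω) ∂P := by
          simp only [id, mul_assoc]
      _ = (∫ ω, f (X ω) * Φ (X ω) * id (U ω) ∂P) * ∫ ω, V ω ∂P :=
          hXUV.integral_fun_comp_mul_comp hXUm hV
            ((hfΦ.comp measurable_fst).mul measurable_snd).aestronglyMeasurable
            aestronglyMeasurable_id
      _ = _ := by
          rw [hX.integral_comp_mul_comp_of_indepFun hU hXU hfΦ.aestronglyMeasurable
            aestronglyMeasurable_id]
          simp only [id, mul_assoc]
  calc ∫ ω, (f (X ω) * U ω + V ω) ^ 2 * Φ (X ω) ∂P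
      = ∫ ω, (f (X ω) ^ 2 * Φ (X ω) * U ω ^ 2 + 2 * (f (X ω) * Φ (X ω) * (U ω * V ω))
          + Φ (X ω) * V ω ^ 2) ∂P := integral_congr_ae (ae_of_all _ fun ω => by ring)
    _ = _ := by
      rw [integral_add ?_ hint₃, integral_add hint₁ (hint₂.const_mul 2),
        integral_const_mul, hcross,
        hX.integral_comp_mul_comp_of_indepFun (ψ := fun u => u ^ 2) hU hXU
          hf2Φ.aestronglyMeasurable (by fun_prop),
        hX.integral_comp_mul_comp_of_indepFun (ψ := fun v => v ^ 2) hV hXV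
          hΦ.aestronglyMeasurable (by fun_prop)]
      · ring
      · exact hint₁.add (hint₂.const_mul 2)

section FourthMoment

variable (hX : HasLaw X μ P) (hU : AEMeasurable U P) (hV : AEMeasurable V P)
  (hf : Measurable f) (hΦ : Measurable Φ) {M C : ℝ} (hfM : ∀ᵐ x ∂μ, |f x| ≤ M)
  (hΦC : ∀ᵐ x ∂μ, |Φ x| ≤ C)
  (hU4 : Integrable (fun ω => U ω ^ 4) P) (hV4 : Integrable (fun ω => V ω ^ 4) P)
include hX

include hfM in
lemma ae_sq_response_mul_sq_le :
    ∀ᵐ ω ∂P, ((f (X ω) * U ω + V ω) ^ 2 * Φ (X ω)) ^ 2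
      ≤ 8 * (M ^ 4 * (Φ (X ω) ^ 2 * U ω ^ 4) + Φ (X ω) ^ 2 * V ω ^ 4) := by
  filter_upwards [ae_of_ae_map hX.aemeasurable (hX.map_eq ▸ hfM)] with ω hfω
  have hf4 : f (X ω) ^ 4 ≤ M ^ 4 := by
    simpa only [Even.pow_abs (by decide : Even 4)] using pow_le_pow_left₀ (abs_nonneg _) hfω 4
  calc ((f (X ω) * U ω + V ω) ^ 2 * Φ (X ω)) ^ 2
      = (f (X ω) * U ω + V ω) ^ 4 * Φ (X ω) ^ 2 := by ring
    _ ≤ 8 * (f (X ω) ^ 4 * U ω ^ 4 + V ω ^ 4) * Φ (X ω) ^ 2 := by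
      gcongr
      simpa only [mul_pow] using add_pow_four_le (f (X ω) * U ω) (V ω)
    _ ≤ 8 * (M ^ 4 * U ω ^ 4 + V ω ^ 4) * Φ (X ω) ^ 2 := by gcongr
    _ = _ := by ring

include hΦ hΦC in
lemma integrable_sq_comp_mul {Y : Ω → ℝ} (hY : Integrable Y P) :
    Integrable (fun ω => Φ (X ω) ^ 2 * Y ω) P := by
  refine hX.integrable_comp_mul (hΦ.pow_const 2).aestronglyMeasurable (C := C ^ 2) ?_ hY
  filter_upwards [hΦC] with x hx
  rw [abs_pow]
  exact pow_le_pow_left₀ (abs_nonneg _) hx 2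

include hΦ hΦC hU4 hV4 in
lemma integrable_sq_response_mul_sq_majorant :
    Integrable (fun ω => 8 * (M ^ 4 * (Φ (X ω) ^ 2 * U ω ^ 4) + Φ (X ω) ^ 2 * V ω ^ 4)) P :=
  (((integrable_sq_comp_mul hX hΦ hΦC hU4).const_mul _).add
    (integrable_sq_comp_mul hX hΦ hΦC hV4)).const_mul 8

include hU hV hf hΦ hfM hΦC hU4 hV4 in
lemma memLp_two_sq_response_mul :
    MemLp (fun ω => (f (X ω) * U ω + V ω) ^ 2 * Φ (X ω)) 2 P := by
  have hXm := hX.aemeasurable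
  have hW : AEMeasurable (fun ω => (f (X ω) * U ω + V ω) ^ 2 * Φ (X ω)) P := by fun_prop
  refine (memLp_two_iff_integrable_sq hW.aestronglyMeasurable).2 <|
    (integrable_sq_response_mul_sq_majorant hX hΦ hΦC hU4 hV4 (M := M)).mono'
      (hW.pow_const 2).aestronglyMeasurable ?_
  filter_upwards [ae_sq_response_mul_sq_le hX hfM] with ω hω
  rwa [Real.norm_eq_abs, abs_of_nonneg (sq_nonneg _)]

include hU hV hΦ hfM hΦC hU4 hV4 in
lemma integral_sq_response_mul_sq_le (hXU : IndepFun X U P) (hXV : IndepFun X V P) :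
    ∫ ω, ((f (X ω) * U ω + V ω) ^ 2 * Φ (X ω)) ^ 2 ∂P
      ≤ 8 * ((∫ ω, U ω ^ 4 ∂P) * M ^ 4 + ∫ ω, V ω ^ 4 ∂P) * ∫ x, Φ x ^ 2 ∂μ := by
  have hΦ2 : AEStronglyMeasurable (fun x => Φ x ^ 2) μ := (hΦ.pow_const 2).aestronglyMeasurable
  calc ∫ ω, ((f (X ω) * U ω + V ω) ^ 2 * Φ (X ω)) ^ 2 ∂P
      ≤ ∫ ω, 8 * (M ^ 4 * (Φ (X ω) ^ 2 * U ω ^ 4) + Φ (X ω) ^ 2 * V ω ^ 4) ∂P :=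
        integral_mono_of_nonneg (ae_of_all _ fun ω => sq_nonneg _)
          (integrable_sq_response_mul_sq_majorant hX hΦ hΦC hU4 hV4)
          (ae_sq_response_mul_sq_le hX hfM)
    _ = 8 * ((∫ ω, U ω ^ 4 ∂P) * M ^ 4 + ∫ ω, V ω ^ 4 ∂P) * ∫ x, Φ x ^ 2 ∂μ := by
      rw [integral_const_mul,
        integral_add ((integrable_sq_comp_mul hX hΦ hΦC hU4).const_mul _)
          (integrable_sq_comp_mul hX hΦ hΦC hV4), integral_const_mul,
        hX.integral_comp_mul_comp_of_indepFun (ψ := fun u => u ^ 4) hU hXU hΦ2 (by fun_prop),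
        hX.integral_comp_mul_comp_of_indepFun (ψ := fun v => v ^ 4) hV hXV hΦ2 (by fun_prop)]
      ring

end FourthMoment

lemma integral_sq_average_sub_integral_eq [IsProbabilityMeasure P] {ι : Type*} [Fintype ι]
    [Nonempty ι] {W : ι → Ω → ℝ} {W₀ : Ω → ℝ}
    (hind : Pairwise fun i j => IndepFun (W i) (W j) P)
    (hid : ∀ i, IdentDistrib (W i) W₀ P P) (hW₀ : MemLp W₀ 2 P) :
    ∫ ω, (1 / (Fintype.card ι : ℝ) * ∑ i, W i ω - ∫ ω', W₀ ω' ∂P) ^ 2 ∂P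
      = variance W₀ P / Fintype.card ι := by
  have hcard : (Fintype.card ι : ℝ) ≠ 0 := Nat.cast_ne_zero.2 Fintype.card_ne_zero
  have hW : ∀ i, MemLp (W i) 2 P := fun i => (hid i).symm.memLp_snd hW₀
  have havg : (fun ω => 1 / (Fintype.card ι : ℝ) * ∑ i, W i ω)
      = (1 / (Fintype.card ι : ℝ)) • ∑ i, W i := by
    ext ω
    simp [Finset.sum_apply]
  have hmean : ∫ ω, 1 / (Fintype.card ι : ℝ) * ∑ i, W i ω ∂P = ∫ ω, W₀ ω ∂P := by
    rw [integral_const_mul, integral_finsetSum _ fun i _ => (hW i).integrable one_le_two]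
    simp only [(hid _).integral_eq, Finset.sum_const, Finset.card_univ, nsmul_eq_mul]
    field_simp
  have hvar : variance (∑ i, W i) P = Fintype.card ι * variance W₀ P := by
    rw [IndepFun.variance_sum (fun i _ => hW i) fun i _ j _ hij => hind hij]
    simp only [(hid _).variance_eq, Finset.sum_const, Finset.card_univ, nsmul_eq_mul]
  rw [← hmean, ← variance_eq_integral, havg, variance_smul, hvar]
  · field_simp
  · exact ((memLp_finsetSum _ fun i _ => hW i).const_mul _).aestronglyMeasurable.aemeasurable

end ProbabilityTheory

theorem linear_coefficient_MSE_H1_general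
    {Ω : Type*} [MeasurableSpace Ω] (P : Measure Ω) [IsProbabilityMeasure P]
    (d : ℕ)
    (X : Ω → (Fin d → ℝ)) (U V : Ω → ℝ)
    (hXm : Measurable X) (hUm : Measurable U) (hVm : Measurable V)
    -- X is uniformly distributed on the cube [0,1]^d
    (hXlaw : Measure.map X P = volume.restrict (Set.Icc (0 : Fin d → ℝ) 1))
    -- E[U⁴] < ∞ and E[V⁴] < ∞
    (hU4 : Integrable (fun ω => (U ω) ^ 4) P)
    (hV4 : Integrable (fun ω => (V ω) ^ 4) P)
    -- X, U, V mutually independent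
    (hXU : IndepFun X U P)
    (hXUV : IndepFun (fun ω => (X ω, U ω)) V P)
    -- f bounded measurable on the cube, Y = f(X)·U + V, r = f²
    (f : (Fin d → ℝ) → ℝ) (hfm : Measurable f)
    (Cf : ℝ) (hf : ∀ x ∈ Set.Icc (0 : Fin d → ℝ) 1, |f x| ≤ Cf)
    (r : (Fin d → ℝ) → ℝ) (hr : ∀ x, r x = (f x) ^ 2)
    -- E[U²] = 1 and (E[U] = 0 or E[V] = 0)
    (hU2int : Integrable (fun ω => (U ω) ^ 2) P)
    (hU2 : ∫ ω, (U ω) ^ 2 ∂P = 1)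
    (hcent : (∫ ω, U ω ∂P = 0) ∨ (∫ ω, V ω ∂P = 0))
    -- the i.i.d. copies (Xᵢ, Uᵢ, Vᵢ), i = 1,…,n, of (X, U, V)
    (n : ℕ) (hn : 1 ≤ n)
    (Xs : Fin n → Ω → (Fin d → ℝ)) (Us Vs : Fin n → Ω → ℝ)
    (hiid : iIndepFun
      (fun i ω => (Xs i ω, Us i ω, Vs i ω)) P)
    (hident : ∀ i, IdentDistrib (fun ω => (Xs i ω, Us i ω, Vs i ω))
      (fun ω => (X ω, U ω, V ω)) P P)
    -- Φ bounded measurable on the cube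
    (Φ : (Fin d → ℝ) → ℝ) (hΦm : Measurable Φ)
    (CΦ : ℝ) (hΦ : ∀ x ∈ Set.Icc (0 : Fin d → ℝ) 1, |Φ x| ≤ CΦ) :
    ∫ ω, ((1 / (n : ℝ)) * (∑ i, (f (Xs i ω) * Us i ω + Vs i ω) ^ 2 * Φ (Xs i ω))
            - (∫ ω', (V ω') ^ 2 ∂P) * (∫ x in Set.Icc (0 : Fin d → ℝ) 1, Φ x)
            - ∫ x in Set.Icc (0 : Fin d → ℝ) 1, r x * Φ x) ^ 2 ∂P
      ≤ 8 * ((∫ ω, (U ω) ^ 4 ∂P) * (⨆ x : (Set.Icc (0 : Fin d → ℝ) 1), |f x.1|) ^ 4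
              + ∫ ω, (V ω) ^ 4 ∂P)
          * (∫ x in Set.Icc (0 : Fin d → ℝ) 1, (Φ x) ^ 2) / n := by
  have hX : HasLaw X (volume.restrict (Set.Icc (0 : Fin d → ℝ) 1)) P :=
    ⟨hXm.aemeasurable, hXlaw⟩
  have hfM : ∀ᵐ x ∂volume.restrict (Set.Icc (0 : Fin d → ℝ) 1),
      |f x| ≤ ⨆ x : (Set.Icc (0 : Fin d → ℝ) 1), |f x.1| :=
    ae_restrict_of_forall_mem measurableSet_Icc fun x hx =>
      le_ciSup (f := fun x : Set.Icc (0 : Fin d → ℝ) 1 => |f x.1|)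
        ⟨Cf, by rintro _ ⟨y, rfl⟩; exact hf y.1 y.2⟩ ⟨x, hx⟩
  have hΦC := ae_restrict_of_forall_mem (μ := volume) measurableSet_Icc hΦ
  have hU2' : MemLp U 2 P := (memLp_two_iff_integrable_sq hUm.aestronglyMeasurable).2 hU2int
  have hV2' : MemLp V 2 P := (memLp_two_iff_integrable_sq hVm.aestronglyMeasurable).2
    (integrable_sq_of_integrable_pow_four hVm.aestronglyMeasurable hV4)
  have hXV : IndepFun X V P := hXUV.comp measurable_fst measurable_id
  set g : (Fin d → ℝ) × ℝ × ℝ → ℝ := fun p => (f p.1 * p.2.1 + p.2.2) ^ 2 * Φ p.1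
  have hg : Measurable g := by fun_prop
  have hmean : ∫ ω, g (X ω, U ω, V ω) ∂P
      = (∫ ω', (V ω') ^ 2 ∂P) * (∫ x in Set.Icc (0 : Fin d → ℝ) 1, Φ x)
        + ∫ x in Set.Icc (0 : Fin d → ℝ) 1, r x * Φ x := by
    rw [integral_sq_response_mul_eq hX hXU hXUV hU2' hV2' hfm hΦm hfM hΦC, hU2]
    simp_rw [hr]
    rcases hcent with h | h <;> simp only [h] <;> ring
  have : NeZero n := ⟨by omega⟩
  have hmse := integral_sq_average_sub_integral_eq
    (W := fun i ω => g (Xs i ω, Us i ω, Vs i ω)) (W₀ := fun ω => g (X ω, U ω, V ω))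
    (fun i j hij => (hiid.indepFun hij).comp hg hg) (fun i => (hident i).comp hg)
    (memLp_two_sq_response_mul hX hUm.aemeasurable hVm.aemeasurable hfm hΦm hfM hΦC hU4 hV4)
  rw [Fintype.card_fin, hmean] at hmse
  calc _ = variance (fun ω => g (X ω, U ω, V ω)) P / n := by simpa only [sub_sub] using hmse
    _ ≤ (∫ ω, g (X ω, U ω, V ω) ^ 2 ∂P) / n := by
      gcongr
      exact variance_le_expectation_sq (hg.comp_aemeasurable (by fun_prop)).aestronglyMeasurable
    _ ≤ _ := by
      gcongr
      exact integral_sq_response_mul_sq_le hX hUm.aemeasurable hVm.aemeasurable hΦm hfM hΦC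
        hU4 hV4 hXU hXV

/-- first inequality of Lemma 2 of the paper, assumption set H1.
With `α = ∫ r Φ` and `α̂ = (1/n) Σᵢ Yᵢ² Φ(Xᵢ) − E[V²] ∫ Φ`, one has
`E[(α̂ − α)²] ≤ 8 (E[U⁴] ‖f‖_∞⁴ + E[V⁴]) (∫ Φ²) / n`. -/
theorem linear_coefficient_MSE_H1
    {Ω : Type*} [MeasurableSpace Ω] (P : Measure Ω) [IsProbabilityMeasure P]
    (d : ℕ) (hd : 1 ≤ d)
    (X : Ω → (Fin d → ℝ)) (U V : Ω → ℝ)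
    (hXm : Measurable X) (hUm : Measurable U) (hVm : Measurable V)
    -- X is uniformly distributed on the cube [0,1]^d
    (hXlaw : Measure.map X P = volume.restrict (Set.Icc (0 : Fin d → ℝ) 1))
    -- E[U⁴] < ∞ and E[V⁴] < ∞
    (hU4 : Integrable (fun ω => (U ω) ^ 4) P)
    (hV4 : Integrable (fun ω => (V ω) ^ 4) P)
    -- X, U, V mutually independent
    (hXU : IndepFun X U P)
    (hXUV : IndepFun (fun ω => (X ω, U ω)) V P)
    -- f bounded measurable on the cube, Y = f(X)·U + V, r = f²
    (f : (Fin d → ℝ) → ℝ) (hfm : Measurable f)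
    (Cf : ℝ) (hf : ∀ x ∈ Set.Icc (0 : Fin d → ℝ) 1, |f x| ≤ Cf)
    (r : (Fin d → ℝ) → ℝ) (hr : ∀ x, r x = (f x) ^ 2)
    -- E[U²] = 1 and (E[U] = 0 or E[V] = 0)
    (hU2int : Integrable (fun ω => (U ω) ^ 2) P)
    (hU2 : ∫ ω, (U ω) ^ 2 ∂P = 1)
    (hcent : (∫ ω, U ω ∂P = 0) ∨ (∫ ω, V ω ∂P = 0))
    -- the i.i.d. copies (Xᵢ, Uᵢ, Vᵢ), i = 1,…,n, of (X, U, V)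
    (n : ℕ) (hn : 1 ≤ n)
    (Xs : Fin n → Ω → (Fin d → ℝ)) (Us Vs : Fin n → Ω → ℝ)
    (hXsm : ∀ i, Measurable (Xs i)) (hUsm : ∀ i, Measurable (Us i))
    (hVsm : ∀ i, Measurable (Vs i))
    (hiid : iIndepFun
      (fun i ω => (Xs i ω, Us i ω, Vs i ω)) P)
    (hident : ∀ i, IdentDistrib (fun ω => (Xs i ω, Us i ω, Vs i ω))
      (fun ω => (X ω, U ω, V ω)) P P)
    -- Φ bounded measurable on the cube
    (Φ : (Fin d → ℝ) → ℝ) (hΦm : Measurable Φ)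
    (CΦ : ℝ) (hΦ : ∀ x ∈ Set.Icc (0 : Fin d → ℝ) 1, |Φ x| ≤ CΦ) :
    ∫ ω, ((1 / (n : ℝ)) * (∑ i, (f (Xs i ω) * Us i ω + Vs i ω) ^ 2 * Φ (Xs i ω))
            - (∫ ω', (V ω') ^ 2 ∂P) * (∫ x in Set.Icc (0 : Fin d → ℝ) 1, Φ x)
            - ∫ x in Set.Icc (0 : Fin d → ℝ) 1, r x * Φ x) ^ 2 ∂P
      ≤ 8 * ((∫ ω, (U ω) ^ 4 ∂P) * (⨆ x : (Set.Icc (0 : Fin d → ℝ) 1), |f x.1|) ^ 4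
              + ∫ ω, (V ω) ^ 4 ∂P)
          * (∫ x in Set.Icc (0 : Fin d → ℝ) 1, (Φ x) ^ 2) / n :=
  linear_coefficient_MSE_H1_general P d X U V hXm hUm hVm hXlaw hU4 hV4 hXU hXUV f hfm Cf hf r hr
    hU2int hU2 hcent n hn Xs Us Vs hiid hident Φ hΦm CΦ hΦ
end

section
/- Assume ∫_{[0,1]^d} Ψ(x) dx = 0 and let β := ∫_{[0,1]^d} r(x)·Ψ(x) dx. For n ≥ 3 set ρ_n := √(n/ln n) and define the truncated estimator β̂ := (1/n)·Σ_{i=1}^n Y_i²·Ψ(X_i)·1_{{|Y_i²·Ψ(X_i)| ≤ ρ_n}}. Then, with M := 8·(E[U⁴]·‖f‖_∞⁴ + E[V⁴])·∫_{[0,1]^d} Ψ(x)² dx, one has E[(β̂ − β)²] ≤ (M + M²)·(ln n)/n. (This is the second inequality of Lemma 2 of the paper under assumption set H1, stated for a general bounded coefficient function Ψ with zero integral.) -/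
open MeasureTheory ProbabilityTheory
open scoped ENNReal

/-!
Write `Z = Y² Ψ(X)`. Independence, `E[U²] = 1`, the centring assumption and `∫ Ψ = 0` give
`E[Z] = β`, and `(a u + v)⁴ ≤ 8 (a⁴ u⁴ + v⁴)` gives `E[Z²] ≤ M`. Truncating `Z` at level `ρ`
moves its mean by at most `E[Z²] / ρ` and does not increase its second moment, so the mean
squared error of the empirical mean of the truncated copies, variance plus squared bias, is at
most `M / n + M² / ρ² = M / n + M² ln n / n`.
-/

noncomputable def truncate (ρ z : ℝ) : ℝ := if |z| ≤ ρ then z else 0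

section Truncate

variable {ρ : ℝ}

lemma measurable_truncate (ρ : ℝ) : Measurable (truncate ρ) :=
  Measurable.ite (measurableSet_le measurable_id.abs measurable_const) measurable_id
    measurable_const

lemma abs_truncate_le (hρ : 0 ≤ ρ) (z : ℝ) : |truncate ρ z| ≤ ρ := by
  unfold truncate
  split_ifs with h
  · exact h
  · simpa using hρ

lemma sq_truncate_le (ρ z : ℝ) : truncate ρ z ^ 2 ≤ z ^ 2 := by
  unfold truncate
  split_ifs
  · exact le_rfl
  · simpa using sq_nonneg z

lemma abs_truncate_sub_le (hρ : 0 < ρ) (z : ℝ) : |truncate ρ z - z| ≤ z ^ 2 / ρ := by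
  unfold truncate
  split_ifs with h
  · rw [sub_self, abs_zero]
    positivity
  · rw [zero_sub, abs_neg, le_div_iff₀ hρ, ← sq_abs]
    nlinarith [abs_nonneg z, not_le.mp h]

end Truncate

section SampleMean

variable {Ω : Type*} [MeasurableSpace Ω] {P : Measure Ω}

lemma variance_sample_mean {n : ℕ} {T : Fin n → Ω → ℝ} {T₀ : Ω → ℝ}
    (hindep : Pairwise fun i j => IndepFun (T i) (T j) P)
    (hident : ∀ i, IdentDistrib (T i) T₀ P P) (hT₀ : MemLp T₀ 2 P) :
    Var[fun ω => (1 / n : ℝ) * ∑ i, T i ω; P] = Var[T₀; P] / n := by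
  have hsum : (fun ω => ∑ i, T i ω) = ∑ i, T i := by ext; simp
  rw [variance_const_mul, hsum, IndepFun.variance_sum
    (fun i _ => (hident i).symm.memLp_snd hT₀) (fun i _ j _ hij => hindep hij)]
  simp only [fun i => (hident i).variance_eq, Finset.sum_const, Finset.card_univ,
    Fintype.card_fin, nsmul_eq_mul]
  rcases eq_or_ne (n : ℝ) 0 with hn | hn
  · simp [hn]
  · field_simp

lemma memLp_truncate_comp [IsFiniteMeasure P] {Z : Ω → ℝ} (hZ : AEMeasurable Z P) {ρ : ℝ}
    (hρ : 0 ≤ ρ) (p : ℝ≥0∞) : MemLp (fun ω => truncate ρ (Z ω)) p P :=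
  .of_bound ((measurable_truncate ρ).comp_aemeasurable hZ).aestronglyMeasurable ρ
    (ae_of_all _ fun ω => abs_truncate_le hρ (Z ω))

variable [IsProbabilityMeasure P]

lemma integral_sq_sub_eq_variance_add_sq {S : Ω → ℝ} (hS : MemLp S 2 P) (b : ℝ) :
    ∫ ω, (S ω - b) ^ 2 ∂P = Var[S; P] + (∫ ω, S ω ∂P - b) ^ 2 := by
  have hSb : MemLp (fun ω => S ω - b) 2 P := hS.sub (memLp_const b)
  rw [← variance_sub_const hS.aestronglyMeasurable b, variance_eq_sub hSb,
    integral_sub (hS.integrable one_le_two) (integrable_const b)]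
  simp

lemma abs_integral_truncate_sub_le {Z : Ω → ℝ} (hZ : MemLp Z 2 P) {ρ : ℝ} (hρ : 0 < ρ) :
    |∫ ω, truncate ρ (Z ω) ∂P - ∫ ω, Z ω ∂P| ≤ (∫ ω, Z ω ^ 2 ∂P) / ρ := by
  have hT : Integrable (fun ω => truncate ρ (Z ω)) P :=
    memLp_one_iff_integrable.1 (memLp_truncate_comp hZ.aemeasurable hρ.le 1)
  rw [← integral_sub hT (hZ.integrable one_le_two), ← integral_div]
  calc |∫ ω, (truncate ρ (Z ω) - Z ω) ∂P| ≤ ∫ ω, |truncate ρ (Z ω) - Z ω| ∂P :=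
        abs_integral_le_integral_abs
    _ ≤ ∫ ω, Z ω ^ 2 / ρ ∂P :=
        integral_mono (hT.sub (hZ.integrable one_le_two)).abs (hZ.integrable_sq.div_const ρ)
          fun ω => abs_truncate_sub_le hρ (Z ω)

theorem integral_sq_truncated_mean_sub_le {n : ℕ} (hn : 0 < n) {Z : Ω → ℝ}
    {Zs : Fin n → Ω → ℝ} (hindep : Pairwise fun i j => IndepFun (Zs i) (Zs j) P)
    (hident : ∀ i, IdentDistrib (Zs i) Z P P) (hZ : MemLp Z 2 P) {ρ : ℝ} (hρ : 0 < ρ) :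
    ∫ ω, ((1 / n : ℝ) * ∑ i, truncate ρ (Zs i ω) - ∫ ω, Z ω ∂P) ^ 2 ∂P
      ≤ (∫ ω, Z ω ^ 2 ∂P) / n + ((∫ ω, Z ω ^ 2 ∂P) / ρ) ^ 2 := by
  set T₀ : Ω → ℝ := fun ω => truncate ρ (Z ω)
  have hT₀ : MemLp T₀ 2 P := memLp_truncate_comp hZ.aemeasurable hρ.le 2
  have hidentT : ∀ i, IdentDistrib (fun ω => truncate ρ (Zs i ω)) T₀ P P :=
    fun i => (hident i).comp (measurable_truncate ρ)
  have hindepT : Pairwise fun i j =>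
      IndepFun (fun ω => truncate ρ (Zs i ω)) (fun ω => truncate ρ (Zs j ω)) P :=
    fun i j hij => (hindep hij).comp (measurable_truncate ρ) (measurable_truncate ρ)
  have hmean : MemLp (fun ω => (1 / n : ℝ) * ∑ i, truncate ρ (Zs i ω)) 2 P :=
    (memLp_finsetSum _ fun i _ => (hidentT i).symm.memLp_snd hT₀).const_mul _
  have hmean_integral : ∫ ω, (1 / n : ℝ) * ∑ i, truncate ρ (Zs i ω) ∂P = ∫ ω, T₀ ω ∂P := by
    rw [integral_const_mul, integral_finsetSum _
      fun i _ => ((hidentT i).symm.memLp_snd hT₀).integrable one_le_two]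
    simp only [fun i => (hidentT i).integral_eq, Finset.sum_const, Finset.card_univ,
      Fintype.card_fin, nsmul_eq_mul]
    field_simp
  rw [integral_sq_sub_eq_variance_add_sq hmean, variance_sample_mean hindepT hidentT hT₀,
    hmean_integral]
  refine add_le_add (div_le_div_of_nonneg_right ?_ n.cast_nonneg) ?_
  · calc Var[T₀; P] ≤ ∫ ω, T₀ ω ^ 2 ∂P := variance_le_expectation_sq hT₀.aestronglyMeasurable
      _ ≤ ∫ ω, Z ω ^ 2 ∂P :=
        integral_mono hT₀.integrable_sq hZ.integrable_sq fun ω => sq_truncate_le ρ (Z ω)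
  · rw [← sq_abs]
    gcongr
    exact abs_integral_truncate_sub_le hZ hρ

end SampleMean

lemma sq_sq_mul_add_mul_le {a u v p F : ℝ} (ha : |a| ≤ F) :
    ((a * u + v) ^ 2 * p) ^ 2 ≤ 8 * F ^ 4 * (p ^ 2 * u ^ 4) + 8 * (p ^ 2 * v ^ 4) := by
  have ha4 : a ^ 4 ≤ F ^ 4 := by
    rw [← (by decide : Even 4).pow_abs]
    exact pow_le_pow_left₀ (abs_nonneg a) ha 4
  calc ((a * u + v) ^ 2 * p) ^ 2 = (a * u + v) ^ 4 * p ^ 2 := by ring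
    _ ≤ 2 ^ 3 * ((a * u) ^ 4 + v ^ 4) * p ^ 2 := by
      gcongr
      exact (by decide : Even 4).add_pow_le
    _ ≤ 8 * (F ^ 4 * u ^ 4 + v ^ 4) * p ^ 2 := by
      rw [mul_pow]
      gcongr
      norm_num
    _ = _ := by ring

lemma MeasureTheory.Integrable.memLp_two_of_pow_four {Ω : Type*} [MeasurableSpace Ω]
    {P : Measure Ω} [IsFiniteMeasure P] {W : Ω → ℝ} (h4 : Integrable (fun ω => W ω ^ 4) P)
    (hW : AEStronglyMeasurable W P) : MemLp W 2 P := by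
  refine (memLp_two_iff_integrable_sq hW).2 ?_
  have h := integrable_norm_pow_of_le hW (p := 2) (q := 4) (by norm_num)
    (by simpa [Real.norm_eq_abs, (by decide : Even 4).pow_abs] using h4)
  simpa [Real.norm_eq_abs, even_two.pow_abs] using h

section RegressionModel

variable {Ω E : Type*} [MeasurableSpace Ω] [MeasurableSpace E] {P : Measure Ω}
  {X : Ω → E} {U V : Ω → ℝ} {f Ψ : E → ℝ} {F C : ℝ}

lemma integral_response_sq_mul (hX : Measurable X) (hU : MemLp U 2 P) (hV : MemLp V 2 P)
    (hXU : IndepFun X U P) (hXUV : IndepFun (fun ω => (X ω, U ω)) V P)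
    (hcent : ∫ ω, U ω ∂P = 0 ∨ ∫ ω, V ω ∂P = 0)
    (hf : Measurable f) (hΨ : Measurable Ψ)
    (hfX : ∀ᵐ ω ∂P, |f (X ω)| ≤ F) (hΨX : ∀ᵐ ω ∂P, |Ψ (X ω)| ≤ C) :
    ∫ ω, (f (X ω) * U ω + V ω) ^ 2 * Ψ (X ω) ∂P
      = (∫ ω, f (X ω) ^ 2 * Ψ (X ω) ∂P) * ∫ ω, U ω ^ 2 ∂P
        + (∫ ω, Ψ (X ω) ∂P) * ∫ ω, V ω ^ 2 ∂P := by
  have ha : MemLp (fun ω => f (X ω)) ∞ P :=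
    memLp_top_of_bound (hf.comp hX).aestronglyMeasurable F hfX
  have hb : MemLp (fun ω => Ψ (X ω)) ∞ P :=
    memLp_top_of_bound (hΨ.comp hX).aestronglyMeasurable C hΨX
  have hab : MemLp (fun ω => f (X ω) * Ψ (X ω)) ∞ P := hb.mul' ha
  have ha2b : MemLp (fun ω => f (X ω) ^ 2 * Ψ (X ω)) ∞ P := by
    simpa only [sq, mul_assoc] using hab.mul' ha
  have hU2 : MemLp (fun ω => U ω ^ 2) 1 P := memLp_one_iff_integrable.2 hU.integrable_sq
  have hV2 : MemLp (fun ω => V ω ^ 2) 1 P := memLp_one_iff_integrable.2 hV.integrable_sq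
  have hUV : MemLp (fun ω => U ω * V ω) 1 P := hV.mul' hU
  have hint₁ : Integrable (fun ω => f (X ω) ^ 2 * Ψ (X ω) * U ω ^ 2) P :=
    memLp_one_iff_integrable.1 (hU2.mul' ha2b)
  have hint₂ : Integrable (fun ω => 2 * (f (X ω) * Ψ (X ω) * U ω * V ω)) P := by
    simpa only [mul_assoc] using (memLp_one_iff_integrable.1 (hUV.mul' hab)).const_mul 2
  have hint₃ : Integrable (fun ω => Ψ (X ω) * V ω ^ 2) P :=
    memLp_one_iff_integrable.1 (hV2.mul' hb)
  have hind₁ : IndepFun (fun ω => f (X ω) ^ 2 * Ψ (X ω)) (fun ω => U ω ^ 2) P :=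
    hXU.comp ((hf.pow_const 2).mul hΨ) (measurable_id.pow_const 2)
  have hindU : IndepFun (fun ω => f (X ω) * Ψ (X ω)) U P := hXU.comp (hf.mul hΨ) measurable_id
  have hind₂ : IndepFun (fun ω => f (X ω) * Ψ (X ω) * U ω) V P :=
    hXUV.comp (((hf.comp measurable_fst).mul (hΨ.comp measurable_fst)).mul measurable_snd)
      measurable_id
  have hind₃ : IndepFun (fun ω => Ψ (X ω)) (fun ω => V ω ^ 2) P :=
    (hXUV.comp measurable_fst measurable_id).comp hΨ (measurable_id.pow_const 2)
  have hcross : ∫ ω, f (X ω) * Ψ (X ω) * U ω * V ω ∂P = 0 := by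
    rw [hind₂.integral_fun_mul_eq_mul_integral (hab.1.mul hU.1) hV.1,
      hindU.integral_fun_mul_eq_mul_integral hab.1 hU.1]
    rcases hcent with h | h <;> simp [h]
  calc ∫ ω, (f (X ω) * U ω + V ω) ^ 2 * Ψ (X ω) ∂P
      = ∫ ω, (f (X ω) ^ 2 * Ψ (X ω) * U ω ^ 2 + 2 * (f (X ω) * Ψ (X ω) * U ω * V ω)
          + Ψ (X ω) * V ω ^ 2) ∂P := by
        congr with ω
        ring
    _ = _ := by
      rw [integral_add (hint₁.fun_add hint₂) hint₃, integral_add hint₁ hint₂, integral_const_mul,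
        hcross, hind₁.integral_fun_mul_eq_mul_integral ha2b.1 hU2.1,
        hind₃.integral_fun_mul_eq_mul_integral hb.1 hV2.1]
      ring

lemma integrable_sq_comp_mul {W : Ω → ℝ} (hX : Measurable X) (hΨ : Measurable Ψ)
    (hΨX : ∀ᵐ ω ∂P, |Ψ (X ω)| ≤ C) (hW : Integrable W P) :
    Integrable (fun ω => Ψ (X ω) ^ 2 * W ω) P :=
  hW.bdd_mul ((hΨ.comp hX).pow_const 2).aestronglyMeasurable (c := C ^ 2) <|
    hΨX.mono fun ω h => by simpa [abs_pow] using pow_le_pow_left₀ (abs_nonneg _) h 2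

lemma integral_sq_response_sq_mul_le (hX : Measurable X) (hU : Integrable (fun ω => U ω ^ 4) P)
    (hV : Integrable (fun ω => V ω ^ 4) P) (hXU : IndepFun X U P) (hXV : IndepFun X V P)
    (hΨ : Measurable Ψ) (hfX : ∀ᵐ ω ∂P, |f (X ω)| ≤ F) (hΨX : ∀ᵐ ω ∂P, |Ψ (X ω)| ≤ C) :
    ∫ ω, ((f (X ω) * U ω + V ω) ^ 2 * Ψ (X ω)) ^ 2 ∂P
      ≤ 8 * ((∫ ω, U ω ^ 4 ∂P) * F ^ 4 + ∫ ω, V ω ^ 4 ∂P) * ∫ ω, Ψ (X ω) ^ 2 ∂P := by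
  have hΨU := integrable_sq_comp_mul hX hΨ hΨX hU
  have hΨV := integrable_sq_comp_mul hX hΨ hΨX hV
  have hsplit : ∀ {W : Ω → ℝ}, IndepFun X W P → Integrable (fun ω => W ω ^ 4) P →
      ∫ ω, Ψ (X ω) ^ 2 * W ω ^ 4 ∂P = (∫ ω, Ψ (X ω) ^ 2 ∂P) * ∫ ω, W ω ^ 4 ∂P :=
    fun hXW hW => IndepFun.integral_fun_mul_eq_mul_integral
      (hXW.comp (hΨ.pow_const 2) (measurable_id.pow_const 4))
      ((hΨ.pow_const 2).comp hX).aestronglyMeasurable hW.aestronglyMeasurable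
  calc ∫ ω, ((f (X ω) * U ω + V ω) ^ 2 * Ψ (X ω)) ^ 2 ∂P
      ≤ ∫ ω, (8 * F ^ 4 * (Ψ (X ω) ^ 2 * U ω ^ 4) + 8 * (Ψ (X ω) ^ 2 * V ω ^ 4)) ∂P :=
        integral_mono_of_nonneg (ae_of_all _ fun ω => sq_nonneg _)
          ((hΨU.const_mul _).add (hΨV.const_mul _))
          (hfX.mono fun ω h => sq_sq_mul_add_mul_le h)
    _ = _ := by
      rw [integral_add (hΨU.const_mul _) (hΨV.const_mul _), integral_const_mul,
        integral_const_mul, hsplit hXU hU, hsplit hXV hV]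
      ring

lemma memLp_response_sq_mul (hX : Measurable X) (hUm : Measurable U) (hVm : Measurable V)
    (hU : Integrable (fun ω => U ω ^ 4) P) (hV : Integrable (fun ω => V ω ^ 4) P)
    (hf : Measurable f) (hΨ : Measurable Ψ)
    (hfX : ∀ᵐ ω ∂P, |f (X ω)| ≤ F) (hΨX : ∀ᵐ ω ∂P, |Ψ (X ω)| ≤ C) :
    MemLp (fun ω => (f (X ω) * U ω + V ω) ^ 2 * Ψ (X ω)) 2 P := by
  have hm : AEStronglyMeasurable (fun ω => (f (X ω) * U ω + V ω) ^ 2 * Ψ (X ω)) P := by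
    fun_prop
  refine (memLp_two_iff_integrable_sq hm).2 <| Integrable.mono'
    (((integrable_sq_comp_mul hX hΨ hΨX hU).const_mul (8 * F ^ 4)).add
      ((integrable_sq_comp_mul hX hΨ hΨX hV).const_mul 8)) (hm.pow 2) ?_
  filter_upwards [hfX] with ω h
  rw [Real.norm_eq_abs, abs_of_nonneg (sq_nonneg _)]
  exact sq_sq_mul_add_mul_le h

end RegressionModel

lemma div_add_sq_div_sqrt_le {M : ℝ} (hM : 0 ≤ M) {n : ℕ} (hn : 3 ≤ n) :
    M / n + (M / √(n / Real.log n)) ^ 2 ≤ (M + M ^ 2) * Real.log n / n := by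
  have hlog : 1 ≤ Real.log n := by
    rw [Real.le_log_iff_exp_le (by positivity)]
    exact Real.exp_one_lt_three.le.trans (by exact_mod_cast hn)
  rw [div_pow, Real.sq_sqrt (by positivity), div_div_eq_mul_div, add_mul, add_div]
  gcongr
  exact le_mul_of_one_le_right hM hlog

theorem truncated_coefficient_MSE_H1_general
    {Ω : Type*} [MeasurableSpace Ω] (P : Measure Ω) [IsProbabilityMeasure P]
    (d : ℕ)
    (X : Ω → (Fin d → ℝ)) (U V : Ω → ℝ)
    (hXm : Measurable X) (hUm : Measurable U) (hVm : Measurable V)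
    -- X is uniformly distributed on the cube [0,1]^d
    (hXlaw : Measure.map X P = volume.restrict (Set.Icc (0 : Fin d → ℝ) 1))
    -- E[U⁴] < ∞ and E[V⁴] < ∞
    (hU4 : Integrable (fun ω => (U ω) ^ 4) P)
    (hV4 : Integrable (fun ω => (V ω) ^ 4) P)
    -- X, U, V mutually independent
    (hXU : IndepFun X U P)
    (hXUV : IndepFun (fun ω => (X ω, U ω)) V P)
    -- f bounded measurable on the cube, r = f²
    (f : (Fin d → ℝ) → ℝ) (hfm : Measurable f)
    (Cf : ℝ) (hf : ∀ x ∈ Set.Icc (0 : Fin d → ℝ) 1, |f x| ≤ Cf)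
    (r : (Fin d → ℝ) → ℝ) (hr : ∀ x, r x = (f x) ^ 2)
    -- E[U²] = 1 and (E[U] = 0 or E[V] = 0)
    (hU2 : ∫ ω, (U ω) ^ 2 ∂P = 1)
    (hcent : (∫ ω, U ω ∂P = 0) ∨ (∫ ω, V ω ∂P = 0))
    -- the i.i.d. copies (Xᵢ, Uᵢ, Vᵢ), i = 1,…,n, of (X, U, V)
    (n : ℕ) (hn : 3 ≤ n)
    (Xs : Fin n → Ω → (Fin d → ℝ)) (Us Vs : Fin n → Ω → ℝ)
    (hiid : iIndepFun
      (fun i ω => (Xs i ω, Us i ω, Vs i ω)) P)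
    (hident : ∀ i, IdentDistrib (fun ω => (Xs i ω, Us i ω, Vs i ω))
      (fun ω => (X ω, U ω, V ω)) P P)
    -- Ψ bounded measurable on the cube with zero integral
    (Ψ : (Fin d → ℝ) → ℝ) (hΨm : Measurable Ψ)
    (CΨ : ℝ) (hΨ : ∀ x ∈ Set.Icc (0 : Fin d → ℝ) 1, |Ψ x| ≤ CΨ)
    (hΨ0 : ∫ x in Set.Icc (0 : Fin d → ℝ) 1, Ψ x = 0)
    -- the constant M and the truncation level ρₙ
    (M : ℝ)
    (hM : M = 8 * ((∫ ω, (U ω) ^ 4 ∂P)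
                      * (⨆ x : (Set.Icc (0 : Fin d → ℝ) 1), |f x.1|) ^ 4
                    + ∫ ω, (V ω) ^ 4 ∂P)
              * ∫ x in Set.Icc (0 : Fin d → ℝ) 1, (Ψ x) ^ 2)
    (ρ : ℝ) (hρ : ρ = Real.sqrt ((n : ℝ) / Real.log n)) :
    ∫ ω, ((1 / (n : ℝ)) * (∑ i,
            if |(f (Xs i ω) * Us i ω + Vs i ω) ^ 2 * Ψ (Xs i ω)| ≤ ρ
              then (f (Xs i ω) * Us i ω + Vs i ω) ^ 2 * Ψ (Xs i ω) else 0)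
          - ∫ x in Set.Icc (0 : Fin d → ℝ) 1, r x * Ψ x) ^ 2 ∂P
      ≤ (M + M ^ 2) * Real.log n / n := by
  have hXcube : ∀ᵐ ω ∂P, X ω ∈ Set.Icc (0 : Fin d → ℝ) 1 :=
    ae_of_ae_map hXm.aemeasurable (hXlaw ▸ ae_restrict_mem measurableSet_Icc)
  have hlaw : ∀ g : (Fin d → ℝ) → ℝ, Measurable g →
      ∫ ω, g (X ω) ∂P = ∫ x in Set.Icc (0 : Fin d → ℝ) 1, g x := fun g hg => by
    rw [← hXlaw, integral_map hXm.aemeasurable hg.aestronglyMeasurable]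
  have hfX : ∀ᵐ ω ∂P, |f (X ω)| ≤ ⨆ x : Set.Icc (0 : Fin d → ℝ) 1, |f x.1| :=
    hXcube.mono fun ω h => le_ciSup (f := fun x : Set.Icc (0 : Fin d → ℝ) 1 => |f x.1|)
      ⟨Cf, by rintro _ ⟨x, rfl⟩; exact hf x.1 x.2⟩ ⟨X ω, h⟩
  have hΨX : ∀ᵐ ω ∂P, |Ψ (X ω)| ≤ CΨ := hXcube.mono fun ω h => hΨ _ h
  have hmean : ∫ ω, (f (X ω) * U ω + V ω) ^ 2 * Ψ (X ω) ∂P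
      = ∫ x in Set.Icc (0 : Fin d → ℝ) 1, r x * Ψ x := by
    rw [integral_response_sq_mul hXm (hU4.memLp_two_of_pow_four hUm.aestronglyMeasurable)
      (hV4.memLp_two_of_pow_four hVm.aestronglyMeasurable) hXU hXUV hcent hfm hΨm hfX hΨX,
      hU2, hlaw _ hΨm, hΨ0, hlaw (fun x => f x ^ 2 * Ψ x) (by fun_prop)]
    simp [hr]
  have hsecond : ∫ ω, ((f (X ω) * U ω + V ω) ^ 2 * Ψ (X ω)) ^ 2 ∂P ≤ M := by
    rw [hM, ← hlaw (fun x => Ψ x ^ 2) (by fun_prop)]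
    exact integral_sq_response_sq_mul_le hXm hU4 hV4 hXU
      (hXUV.comp measurable_fst measurable_id) hΨm hfX hΨX
  have hM0 : 0 ≤ M := (integral_nonneg fun ω => sq_nonneg _).trans hsecond
  have hρ0 : 0 < ρ := hρ ▸ Real.sqrt_pos.2 (div_pos (by positivity)
    (Real.log_pos (by exact_mod_cast (by omega : 1 < n))))
  have hg : Measurable fun p : (Fin d → ℝ) × ℝ × ℝ => (f p.1 * p.2.1 + p.2.2) ^ 2 * Ψ p.1 := by
    fun_prop
  have key := integral_sq_truncated_mean_sub_le (by omega)
    (fun i j hij => (hiid.comp _ fun _ => hg).indepFun hij) (fun i => (hident i).comp hg)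
    (memLp_response_sq_mul hXm hUm hVm hU4 hV4 hfm hΨm hfX hΨX) hρ0
  simp only [Function.comp_apply, hmean] at key
  calc _ ≤ _ := key
    _ ≤ M / n + (M / ρ) ^ 2 := by gcongr
    _ ≤ (M + M ^ 2) * Real.log n / n := hρ ▸ div_add_sq_div_sqrt_le hM0 hn

/-- second inequality of Lemma 2 of the paper, assumption set H1.
If `∫ Ψ = 0`, `β = ∫ r Ψ`, `ρₙ = √(n / ln n)` and
`β̂ = (1/n) Σᵢ Yᵢ² Ψ(Xᵢ) 1_{|Yᵢ² Ψ(Xᵢ)| ≤ ρₙ}`, then with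
`M = 8 (E[U⁴] ‖f‖_∞⁴ + E[V⁴]) ∫ Ψ²` one has `E[(β̂ − β)²] ≤ (M + M²) (ln n)/n`. -/
theorem truncated_coefficient_MSE_H1
    {Ω : Type*} [MeasurableSpace Ω] (P : Measure Ω) [IsProbabilityMeasure P]
    (d : ℕ) (hd : 1 ≤ d)
    (X : Ω → (Fin d → ℝ)) (U V : Ω → ℝ)
    (hXm : Measurable X) (hUm : Measurable U) (hVm : Measurable V)
    -- X is uniformly distributed on the cube [0,1]^d
    (hXlaw : Measure.map X P = volume.restrict (Set.Icc (0 : Fin d → ℝ) 1))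
    -- E[U⁴] < ∞ and E[V⁴] < ∞
    (hU4 : Integrable (fun ω => (U ω) ^ 4) P)
    (hV4 : Integrable (fun ω => (V ω) ^ 4) P)
    -- X, U, V mutually independent
    (hXU : IndepFun X U P)
    (hXUV : IndepFun (fun ω => (X ω, U ω)) V P)
    -- f bounded measurable on the cube, r = f²
    (f : (Fin d → ℝ) → ℝ) (hfm : Measurable f)
    (Cf : ℝ) (hf : ∀ x ∈ Set.Icc (0 : Fin d → ℝ) 1, |f x| ≤ Cf)
    (r : (Fin d → ℝ) → ℝ) (hr : ∀ x, r x = (f x) ^ 2)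
    -- E[U²] = 1 and (E[U] = 0 or E[V] = 0)
    (hU2int : Integrable (fun ω => (U ω) ^ 2) P)
    (hU2 : ∫ ω, (U ω) ^ 2 ∂P = 1)
    (hcent : (∫ ω, U ω ∂P = 0) ∨ (∫ ω, V ω ∂P = 0))
    -- the i.i.d. copies (Xᵢ, Uᵢ, Vᵢ), i = 1,…,n, of (X, U, V)
    (n : ℕ) (hn : 3 ≤ n)
    (Xs : Fin n → Ω → (Fin d → ℝ)) (Us Vs : Fin n → Ω → ℝ)
    (hXsm : ∀ i, Measurable (Xs i)) (hUsm : ∀ i, Measurable (Us i))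
    (hVsm : ∀ i, Measurable (Vs i))
    (hiid : iIndepFun
      (fun i ω => (Xs i ω, Us i ω, Vs i ω)) P)
    (hident : ∀ i, IdentDistrib (fun ω => (Xs i ω, Us i ω, Vs i ω))
      (fun ω => (X ω, U ω, V ω)) P P)
    -- Ψ bounded measurable on the cube with zero integral
    (Ψ : (Fin d → ℝ) → ℝ) (hΨm : Measurable Ψ)
    (CΨ : ℝ) (hΨ : ∀ x ∈ Set.Icc (0 : Fin d → ℝ) 1, |Ψ x| ≤ CΨ)
    (hΨ0 : ∫ x in Set.Icc (0 : Fin d → ℝ) 1, Ψ x = 0)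
    -- the constant M and the truncation level ρₙ
    (M : ℝ)
    (hM : M = 8 * ((∫ ω, (U ω) ^ 4 ∂P)
                      * (⨆ x : (Set.Icc (0 : Fin d → ℝ) 1), |f x.1|) ^ 4
                    + ∫ ω, (V ω) ^ 4 ∂P)
              * ∫ x in Set.Icc (0 : Fin d → ℝ) 1, (Ψ x) ^ 2)
    (ρ : ℝ) (hρ : ρ = Real.sqrt ((n : ℝ) / Real.log n)) :
    ∫ ω, ((1 / (n : ℝ)) * (∑ i,
            if |(f (Xs i ω) * Us i ω + Vs i ω) ^ 2 * Ψ (Xs i ω)| ≤ ρ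
              then (f (Xs i ω) * Us i ω + Vs i ω) ^ 2 * Ψ (Xs i ω) else 0)
          - ∫ x in Set.Icc (0 : Fin d → ℝ) 1, r x * Ψ x) ^ 2 ∂P
      ≤ (M + M ^ 2) * Real.log n / n :=
  truncated_coefficient_MSE_H1_general P d X U V hXm hUm hVm hXlaw hU4 hV4 hXU hXUV f hfm Cf hf r hr
    hU2 hcent n hn Xs Us Vs hiid hident Ψ hΨm CΨ hΨ hΨ0 M hM ρ hρ
end

section
/- For all real numbers b̂, b and every t > 0, the hard-thresholded value satisfies the pointwise inequality (b̂·1_{{|b̂| ≥ t}} − b)² ≤ 4·(b̂ − b)²·1_{{|b̂ − b| > t/2}} + 4·(b̂ − b)²·1_{{|b| ≥ t/2}} + 4·b²·1_{{|b| ≤ 2t}}. (This is the deterministic decomposition of the hard-thresholding error into the three terms Q₁, Q₂, Q₃ used in equation (q2) of the proof of Theorem 1(b) of the paper.) -/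
/-- deterministic decomposition of the hard-thresholding error
into the three terms `Q₁`, `Q₂`, `Q₃`, equation (q2) in the proof of
Theorem 1(b) of the paper.
For all reals `b̂`, `b` and every `t > 0`,
`(b̂ 1_{|b̂| ≥ t} − b)² ≤ 4 (b̂−b)² 1_{|b̂−b| > t/2} + 4 (b̂−b)² 1_{|b| ≥ t/2}
  + 4 b² 1_{|b| ≤ 2t}`. -/
theorem hard_threshold_decomposition (bhat b t : ℝ) (ht : 0 < t) :
    ((if t ≤ |bhat| then bhat else 0) - b) ^ 2
      ≤ 4 * (bhat - b) ^ 2 * (if t / 2 < |bhat - b| then 1 else 0)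
        + 4 * (bhat - b) ^ 2 * (if t / 2 ≤ |b| then 1 else 0)
        + 4 * b ^ 2 * (if |b| ≤ 2 * t then 1 else 0) := by
  by_cases hth : t ≤ |bhat|
  · simp only [if_pos hth]
    by_cases h1 : t / 2 < |bhat - b|
    · rw [if_pos h1]
      have h3 : (0:ℝ) ≤ 4 * b ^ 2 * (if |b| ≤ 2 * t then 1 else 0) := by positivity
      have h2 : (0:ℝ) ≤ 4 * (bhat - b) ^ 2 * (if t / 2 ≤ |b| then 1 else 0) := by positivity
      nlinarith [sq_nonneg (bhat - b)]
    · push_neg at h1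
      have hb : t / 2 ≤ |b| := by
        have := abs_sub_abs_le_abs_sub bhat b
        linarith
      rw [if_neg (not_lt.mpr h1), if_pos hb]
      have h3 : (0:ℝ) ≤ 4 * b ^ 2 * (if |b| ≤ 2 * t then 1 else 0) := by positivity
      nlinarith [sq_nonneg (bhat - b)]
  · simp only [if_neg hth, zero_sub]
    push_neg at hth
    by_cases h2 : |b| ≤ 2 * t
    · rw [if_pos h2]
      have ha : (0:ℝ) ≤ 4 * (bhat - b) ^ 2 * (if t / 2 < |bhat - b| then 1 else 0) := by positivity
      have hb : (0:ℝ) ≤ 4 * (bhat - b) ^ 2 * (if t / 2 ≤ |b| then 1 else 0) := by positivity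
      nlinarith [sq_nonneg b]
    · push_neg at h2
      have hd : |b| - |bhat| ≤ |bhat - b| := by
        have := abs_sub_abs_le_abs_sub b bhat
        rwa [abs_sub_comm] at this
      have h1 : t / 2 < |bhat - b| := by linarith
      rw [if_pos h1, if_neg (not_le.mpr h2)]
      have hb : (0:ℝ) ≤ 4 * (bhat - b) ^ 2 * (if t / 2 ≤ |b| then 1 else 0) := by positivity
      have hba : 0 ≤ |b| - |bhat| := by linarith
      have hsq : (|b| - |bhat|) ^ 2 ≤ |bhat - b| ^ 2 := by
        apply sq_le_sq' <;> nlinarith [abs_nonneg (bhat - b)]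
      have habs : |bhat - b| ^ 2 = (bhat - b) ^ 2 := sq_abs _
      nlinarith [sq_abs b, abs_nonneg b, abs_nonneg bhat]
end

section
/- Let d ≥ 1 be an integer and s, κ, C > 0. Let n ≥ 3, set t_n := √((ln n)/n), and let j_*, j₁ be integers with τ ≤ j_* ≤ j₁ satisfying 2^{j_*·(2s+d)} ≤ n, n^{d/(2s+d)} ≤ 2^{j₁·d} and 2^{j₁·d} ≤ n/ln n. For each integer j with j_* ≤ j ≤ j₁ let Λ_j be a finite index set with card(Λ_j) ≤ C·2^{j·d}, let (β_{j,k})_{k∈Λ_j} be real numbers satisfying the level-wise decay Σ_{k∈Λ_j} β_{j,k}² ≤ C·2^{−2js}, and let (β̂_{j,k})_{k∈Λ_j} be square-integrable real-valued random variables satisfying, for every k ∈ Λ_j, E[(β̂_{j,k} − β_{j,k})²] ≤ C·(ln n)/n and E[(β̂_{j,k} − β_{j,k})²·1_{{|β̂_{j,k} − β_{j,k}| > κ·t_n/2}}] ≤ C·n^{−2}. Then there exists a constant C' > 0, depending only on C, κ, s and d (but not on n, j_*, j₁, the index sets, the coefficients or the estimators), such that Σ_{j=j_*}^{j₁} Σ_{k∈Λ_j}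 E[(β̂_{j,k}·1_{{|β̂_{j,k}| ≥ κ·t_n}} − β_{j,k})²] ≤ C'·(ln n)·n^{−2s/(2s+d)}. (This is the bound Q ≲ (ln n)·n^{−2s/(2s+d)} on the hard-thresholded detail-coefficient error, which is the core of part (b) of Theorem 1 of the paper, with the Besov-space level-wise coefficient decay for p ≥ 2 stated as an explicit hypothesis.) -/
/-!
Hard thresholding at level `t` satisfies the deterministic inequality
`(η_t u - b)² ≤ 9 (u - b)² 1{|u - b| > t/2} + (u - b)² 1{|b| ≥ t/2} + min(b², (3t/2)²)`:
either the noise `u - b` is large, or the keep/kill decision is correct up to a factor.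
Taking expectations with the variance and tail hypotheses gives, for each coefficient,
`E (η_t β̂ - β)² ≤ 9 C n⁻² + K min(β², t²)`. On level `j` the minima add up to at most
`C min(2^{-2js}, 2^{jd} t²)`, and `Σ_j min(2^{-2js}, 2^{jd} ε) ≲ ε^{2s/(2s+d)}` by splitting at
the level where `2^{j(2s+d)} ≈ 1/ε` and summing two geometric series. With `ε = t² ≍ (ln n)/n`
this is the rate, while the `n⁻²` terms add up to `O(2^{j₁d} n⁻²) = O(1/(n ln n))`.
-/

open MeasureTheory Finset

noncomputable def hardThreshold (t u : ℝ) : ℝ := if t ≤ |u| then u else 0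

theorem sq_hardThreshold_sub_le (t u b : ℝ) :
    (hardThreshold t u - b) ^ 2 ≤
      9 * ((u - b) ^ 2 * (if t / 2 < |u - b| then 1 else 0))
        + (if t / 2 ≤ |b| then 1 else 0) * (u - b) ^ 2 + min (b ^ 2) ((3 * t / 2) ^ 2) := by
  have hb : |b| - |u| ≤ |u - b| := abs_sub_comm b u ▸ abs_sub_abs_le_abs_sub b u
  have hu : |u| - |b| ≤ |u - b| := abs_sub_abs_le_abs_sub u b
  have hmin : 0 ≤ min (b ^ 2) ((3 * t / 2) ^ 2) := le_min (sq_nonneg _) (sq_nonneg _)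
  have hsq : 0 ≤ (u - b) ^ 2 := sq_nonneg _
  unfold hardThreshold
  by_cases hkeep : t ≤ |u|
  · rw [if_pos hkeep]
    split_ifs <;> linarith
  rw [if_neg hkeep, zero_sub, neg_sq]
  by_cases htail : t / 2 < |u - b|
  · have : b ^ 2 ≤ (3 * (u - b)) ^ 2 :=
      sq_le_sq.2 (by rw [abs_mul, abs_of_pos (by norm_num : (0 : ℝ) < 3)]; linarith)
    rw [if_pos htail]
    split_ifs <;> linarith
  · have : b ^ 2 ≤ (3 * t / 2) ^ 2 :=
      sq_le_sq' (by linarith [neg_abs_le b]) (by linarith [le_abs_self b])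
    rw [if_neg htail, min_eq_left this]
    split_ifs <;> linarith

theorem integral_sq_hardThreshold_sub_le {Ω : Type*} [MeasurableSpace Ω] {P : Measure Ω}
    [IsProbabilityMeasure P] {X : Ω → ℝ} (hX : Measurable X)
    (hX2 : Integrable (fun ω => X ω ^ 2) P) (t b : ℝ) :
    ∫ ω, (hardThreshold t (X ω) - b) ^ 2 ∂P ≤
      9 * ∫ ω, (X ω - b) ^ 2 * (if t / 2 < |X ω - b| then 1 else 0) ∂P
        + (if t / 2 ≤ |b| then 1 else 0) * ∫ ω, (X ω - b) ^ 2 ∂P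
        + min (b ^ 2) ((3 * t / 2) ^ 2) := by
  have hsq : Integrable (fun ω => (X ω - b) ^ 2) P :=
    (((memLp_two_iff_integrable_sq hX.aestronglyMeasurable).2 hX2).sub
      (memLp_const b)).integrable_sq
  have htail : Integrable (fun ω => (X ω - b) ^ 2 * (if t / 2 < |X ω - b| then 1 else 0)) P := by
    refine hsq.mono (((hX.sub_const b).pow_const 2).mul (Measurable.ite
      (measurableSet_lt measurable_const (hX.sub_const b).abs) measurable_const
      measurable_const)).aestronglyMeasurable (ae_of_all _ fun ω => ?_)
    split_ifs <;> simp [sq_nonneg]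
  set c : ℝ := if t / 2 ≤ |b| then 1 else 0
  set e : ℝ := min (b ^ 2) ((3 * t / 2) ^ 2)
  have hint : Integrable (fun ω => 9 * ((X ω - b) ^ 2 * (if t / 2 < |X ω - b| then 1 else 0))
      + c * (X ω - b) ^ 2 + e) P :=
    ((htail.const_mul 9).add (hsq.const_mul c)).add (integrable_const e)
  refine (integral_mono_of_nonneg (ae_of_all _ fun ω => sq_nonneg _) hint
    (ae_of_all _ fun ω => sq_hardThreshold_sub_le t (X ω) b)).trans_eq ?_
  rw [integral_add (by exact (htail.const_mul 9).add (hsq.const_mul _)) (integrable_const _),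
    integral_add (htail.const_mul 9) (hsq.const_mul _), integral_const_mul, integral_const_mul,
    integral_const, probReal_univ, one_smul]

theorem integral_sq_hardThreshold_sub_le_min {Ω : Type*} [MeasurableSpace Ω] {P : Measure Ω}
    [IsProbabilityMeasure P] {X : Ω → ℝ} (hX : Measurable X)
    (hX2 : Integrable (fun ω => X ω ^ 2) P) {t b v δ : ℝ} (ht : 0 ≤ t) (hv : 0 ≤ v)
    (hvar : ∫ ω, (X ω - b) ^ 2 ∂P ≤ v * t ^ 2)
    (htail : ∫ ω, (X ω - b) ^ 2 * (if t / 2 < |X ω - b| then 1 else 0) ∂P ≤ δ) :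
    ∫ ω, (hardThreshold t (X ω) - b) ^ 2 ∂P
      ≤ 9 * δ + (4 * v + 9 / 4) * min (b ^ 2) (t ^ 2) := by
  have hmin : 0 ≤ min (b ^ 2) (t ^ 2) := le_min (sq_nonneg _) (sq_nonneg _)
  have hbig : (if t / 2 ≤ |b| then 1 else 0) * ∫ ω, (X ω - b) ^ 2 ∂P
      ≤ 4 * v * min (b ^ 2) (t ^ 2) := by
    split_ifs with hb
    · have : t ^ 2 ≤ 4 * min (b ^ 2) (t ^ 2) := by
        rw [mul_min_of_nonneg _ _ (by norm_num)]
        exact le_min (by nlinarith [sq_abs b]) (by nlinarith [sq_nonneg t])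
      calc 1 * ∫ ω, (X ω - b) ^ 2 ∂P ≤ v * t ^ 2 := by rw [one_mul]; exact hvar
        _ ≤ v * (4 * min (b ^ 2) (t ^ 2)) := by gcongr
        _ = _ := by ring
    · rw [zero_mul]; positivity
  have hsmall : min (b ^ 2) ((3 * t / 2) ^ 2) ≤ 9 / 4 * min (b ^ 2) (t ^ 2) := by
    rw [mul_min_of_nonneg _ _ (by norm_num)]
    exact min_le_min (by nlinarith [sq_nonneg b]) (by ring_nf; rfl)
  have := integral_sq_hardThreshold_sub_le hX hX2 t b
  linarith

theorem Finset.sum_min_le_min_sum {ι : Type*} (s : Finset ι) (f : ι → ℝ) (c : ℝ) :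
    ∑ i ∈ s, min (f i) c ≤ min (∑ i ∈ s, f i) (#s * c) := by
  refine le_min (sum_le_sum fun i _ => min_le_left _ _) ?_
  simpa using sum_le_sum fun i (_ : i ∈ s) => min_le_right (f i) c

theorem sum_integral_sq_hardThreshold_sub_le {Ω ι : Type*} [MeasurableSpace Ω]
    {P : Measure Ω} [IsProbabilityMeasure P] [Fintype ι] {X : ι → Ω → ℝ} {b : ι → ℝ}
    (hX : ∀ k, Measurable (X k)) (hX2 : ∀ k, Integrable (fun ω => X k ω ^ 2) P)
    {t v δ C N B : ℝ} (ht : 0 ≤ t) (hv : 0 ≤ v) (hδ : 0 ≤ δ) (hC : 0 ≤ C)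
    (hcard : (Fintype.card ι : ℝ) ≤ C * N) (hb : ∑ k, b k ^ 2 ≤ C * B)
    (hvar : ∀ k, ∫ ω, (X k ω - b k) ^ 2 ∂P ≤ v * t ^ 2)
    (htail : ∀ k,
      ∫ ω, (X k ω - b k) ^ 2 * (if t / 2 < |X k ω - b k| then 1 else 0) ∂P ≤ δ) :
    ∑ k, ∫ ω, (hardThreshold t (X k ω) - b k) ^ 2 ∂P
      ≤ C * N * (9 * δ) + (4 * v + 9 / 4) * C * min B (N * t ^ 2) := by
  calc ∑ k, ∫ ω, (hardThreshold t (X k ω) - b k) ^ 2 ∂P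
      ≤ ∑ k, (9 * δ + (4 * v + 9 / 4) * min (b k ^ 2) (t ^ 2)) :=
        sum_le_sum fun k _ => integral_sq_hardThreshold_sub_le_min (hX k) (hX2 k) ht hv
          (hvar k) (htail k)
    _ ≤ Fintype.card ι * (9 * δ)
        + (4 * v + 9 / 4) * min (∑ k, b k ^ 2) (Fintype.card ι * t ^ 2) := by
        rw [sum_add_distrib, sum_const, card_univ, nsmul_eq_mul, ← mul_sum]
        gcongr
        exact sum_min_le_min_sum _ _ _
    _ ≤ C * N * (9 * δ) + (4 * v + 9 / 4) * min (C * B) (C * N * t ^ 2) := by gcongr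
    _ = _ := by rw [mul_assoc C N (t ^ 2), ← mul_min_of_nonneg _ _ hC]; ring

theorem sum_Icc_zpow_le_of_lt_one {K : Type*} [Field K] [LinearOrder K] [IsStrictOrderedRing K]
    {q : K} (hq₀ : 0 < q) (hq₁ : q < 1) (a b : ℤ) :
    ∑ j ∈ Icc a b, q ^ j ≤ q ^ a / (1 - q) := by
  rw [Int.Icc_eq_finset_map, sum_map]
  simp only [Function.Embedding.trans_apply, Nat.castEmbedding_apply, addLeftEmbedding_apply,
    zpow_add₀ hq₀.ne', zpow_natCast, ← mul_sum, range_eq_Ico]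
  calc q ^ a * ∑ i ∈ Ico 0 (b + 1 - a).toNat, q ^ i ≤ q ^ a * (q ^ 0 / (1 - q)) :=
        mul_le_mul_of_nonneg_left (geom_sum_Ico_le_of_lt_one hq₀.le hq₁) (zpow_pos hq₀ a).le
    _ = q ^ a / (1 - q) := by rw [pow_zero, mul_one_div]

theorem sum_Icc_rpow_mul_le_of_neg {c x : ℝ} (hc : 1 < c) (hx : x < 0) (a b : ℤ) :
    ∑ j ∈ Icc a b, c ^ ((j : ℝ) * x) ≤ c ^ ((a : ℝ) * x) / (1 - c ^ x) := by
  have hcx : ∀ j : ℤ, c ^ ((j : ℝ) * x) = (c ^ x) ^ j := fun j => by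
    rw [mul_comm, Real.rpow_mul (by linarith), Real.rpow_intCast]
  simp only [hcx]
  exact sum_Icc_zpow_le_of_lt_one (Real.rpow_pos_of_pos (by linarith) x)
    (Real.rpow_lt_one_of_one_lt_of_neg hc hx) a b

theorem sum_Icc_rpow_mul_le_of_pos {c x : ℝ} (hc : 1 < c) (hx : 0 < x) (a b : ℤ) :
    ∑ j ∈ Icc a b, c ^ ((j : ℝ) * x) ≤ c ^ ((b : ℝ) * x) / (1 - c ^ (-x)) := by
  have hneg :
      ∑ j ∈ Icc a b, c ^ ((j : ℝ) * x) = ∑ j ∈ Icc (-b) (-a), c ^ ((j : ℝ) * -x) := by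
    refine sum_nbij' Neg.neg Neg.neg (fun j hj => ?_) (fun j hj => ?_) (fun j _ => neg_neg j)
      (fun j _ => neg_neg j) (fun j _ => by push_cast; ring_nf)
    all_goals simp only [mem_Icc] at hj ⊢; omega
  rw [hneg]
  simpa using sum_Icc_rpow_mul_le_of_neg hc (neg_neg_of_pos hx) (-b) (-a)

theorem sum_Icc_min_two_rpow_le_add {s d ε : ℝ} (hs : 0 < s) (hd : 0 < d) (hε : 0 ≤ ε)
    (a b m : ℤ) :
    ∑ j ∈ Icc a b, min ((2 : ℝ) ^ (-(2 * (j : ℝ) * s))) ((2 : ℝ) ^ ((j : ℝ) * d) * ε)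
      ≤ (2 : ℝ) ^ ((m : ℝ) * d) * ε / (1 - 2 ^ (-d))
        + (2 : ℝ) ^ (((m : ℝ) + 1) * -(2 * s)) / (1 - 2 ^ (-(2 * s))) := by
  rw [← sum_filter_add_sum_filter_not (Icc a b) (· ≤ m)]
  gcongr
  · calc ∑ j ∈ Icc a b with j ≤ m,
          min ((2 : ℝ) ^ (-(2 * (j : ℝ) * s))) (2 ^ ((j : ℝ) * d) * ε)
        ≤ ∑ j ∈ Icc a m, (2 : ℝ) ^ ((j : ℝ) * d) * ε := by
          refine sum_le_sum_of_subset_of_nonneg ?_ (fun _ _ _ => by positivity)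
            |>.trans' (sum_le_sum fun _ _ => min_le_right _ _)
          intro j; simp only [mem_filter, mem_Icc]; omega
      _ ≤ (2 : ℝ) ^ ((m : ℝ) * d) / (1 - 2 ^ (-d)) * ε := by
          rw [← sum_mul]
          gcongr
          exact sum_Icc_rpow_mul_le_of_pos one_lt_two hd a m
      _ = _ := by ring
  · calc ∑ j ∈ Icc a b with ¬j ≤ m,
          min ((2 : ℝ) ^ (-(2 * (j : ℝ) * s))) (2 ^ ((j : ℝ) * d) * ε)
        ≤ ∑ j ∈ Icc (m + 1) b, (2 : ℝ) ^ ((j : ℝ) * -(2 * s)) := by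
          refine sum_le_sum_of_subset_of_nonneg ?_ (fun _ _ _ => by positivity)
            |>.trans' (sum_le_sum fun j _ => (min_le_left _ _).trans_eq (by ring_nf))
          intro j; simp only [mem_filter, mem_Icc]; omega
      _ ≤ _ := by
          simpa using
            sum_Icc_rpow_mul_le_of_neg one_lt_two (by linarith : -(2 * s) < 0) (m + 1) b

theorem sum_Icc_min_two_rpow_le_rpow {s d ε : ℝ} (hs : 0 < s) (hd : 0 < d) (hε : 0 < ε)
    (a b : ℤ) :
    ∑ j ∈ Icc a b, min ((2 : ℝ) ^ (-(2 * (j : ℝ) * s))) ((2 : ℝ) ^ ((j : ℝ) * d) * ε)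
      ≤ (1 / (1 - 2 ^ (-d)) + 1 / (1 - 2 ^ (-(2 * s)))) * ε ^ (2 * s / (2 * s + d)) := by
  set r := ε ^ (-(2 * s + d)⁻¹)
  have hr : 0 < r := Real.rpow_pos_of_pos hε _
  -- `m` is the level where `2^{m(2s+d)} ≈ 1/ε`, at which the two terms of the minimum balance.
  set m := Int.log 2 r
  have two_rpow_eq (j : ℤ) (x : ℝ) : (2 : ℝ) ^ ((j : ℝ) * x) = ((2 : ℝ) ^ j) ^ x := by
    rw [Real.rpow_mul zero_le_two, Real.rpow_intCast]
  have hlow : (2 : ℝ) ^ ((m : ℝ) * d) * ε ≤ ε ^ (2 * s / (2 * s + d)) := by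
    calc (2 : ℝ) ^ ((m : ℝ) * d) * ε ≤ r ^ d * ε := by
          rw [two_rpow_eq]
          gcongr
          exact_mod_cast Int.zpow_log_le_self one_lt_two hr
      _ = ε ^ (2 * s / (2 * s + d)) := by
          rw [← Real.rpow_mul hε.le, ← Real.rpow_add_one hε.ne']
          congr 1
          field_simp
          ring
  have hhigh : (2 : ℝ) ^ (((m : ℝ) + 1) * -(2 * s)) ≤ ε ^ (2 * s / (2 * s + d)) := by
    calc (2 : ℝ) ^ (((m : ℝ) + 1) * -(2 * s)) ≤ r ^ (-(2 * s)) := by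
          rw [show (m : ℝ) + 1 = ((m + 1 : ℤ) : ℝ) by push_cast; rfl, two_rpow_eq]
          exact Real.rpow_le_rpow_of_nonpos hr
            (by exact_mod_cast (Int.lt_zpow_succ_log_self one_lt_two r).le) (by linarith)
      _ = ε ^ (2 * s / (2 * s + d)) := by
          rw [← Real.rpow_mul hε.le]
          congr 1
          field_simp
  have hd' : 0 < 1 - (2 : ℝ) ^ (-d) :=
    sub_pos.2 (Real.rpow_lt_one_of_one_lt_of_neg one_lt_two (by linarith))
  have hs' : 0 < 1 - (2 : ℝ) ^ (-(2 * s)) :=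
    sub_pos.2 (Real.rpow_lt_one_of_one_lt_of_neg one_lt_two (by linarith))
  calc _ ≤ _ := sum_Icc_min_two_rpow_le_add hs hd hε.le a b m
    _ ≤ ε ^ (2 * s / (2 * s + d)) / (1 - 2 ^ (-d))
        + ε ^ (2 * s / (2 * s + d)) / (1 - 2 ^ (-(2 * s))) := by gcongr
    _ = _ := by ring

theorem rpow_mul_log_div_le {x θ a : ℝ} (hx : 0 < x) (hlog : 1 ≤ Real.log x) (hθ : θ ≤ 1)
    (ha : 0 ≤ a) : (a * (Real.log x / x)) ^ θ ≤ a ^ θ * Real.log x * x ^ (-θ) := by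
  rw [Real.mul_rpow ha (by positivity), Real.div_rpow (by positivity) hx.le, Real.rpow_neg hx.le,
    mul_assoc, div_eq_mul_inv]
  gcongr
  calc Real.log x ^ θ ≤ Real.log x ^ (1 : ℝ) := Real.rpow_le_rpow_of_exponent_le hlog hθ
    _ = Real.log x := Real.rpow_one _

theorem div_log_div_sq_le_log_mul_rpow {x θ : ℝ} (hx : 1 ≤ x) (hlog : 1 ≤ Real.log x)
    (hθ : θ ≤ 1) : x / Real.log x / x ^ 2 ≤ Real.log x * x ^ (-θ) := by
  calc x / Real.log x / x ^ 2 ≤ x ^ (-1 : ℝ) := by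
        rw [Real.rpow_neg_one, div_div, div_le_iff₀ (by positivity)]
        field_simp
        nlinarith
    _ ≤ x ^ (-θ) := Real.rpow_le_rpow_of_exponent_le hx (by linarith)
    _ ≤ Real.log x * x ^ (-θ) := le_mul_of_one_le_left (by positivity) hlog

/-- the bound `Q ≲ (ln n) n^{−2s/(2s+d)}` on the
hard-thresholded detail-coefficient error, the core of part (b) of Theorem 1 of
the paper.
There is a constant `C' > 0`, depending only on `C`, `κ`, `s` and `d`, such that
for all `n ≥ 3`, all levels `τ ≤ j_* ≤ j₁` with
`2^{j_*(2s+d)} ≤ n`, `n^{d/(2s+d)} ≤ 2^{j₁ d} ≤ n / ln n`, all index sets `Λ_j`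
with `card(Λ_j) ≤ C 2^{jd}`, all coefficients with level-wise decay
`Σ_k β_{j,k}² ≤ C 2^{−2js}`, and all square-integrable estimators `β̂_{j,k}` with
`E[(β̂_{j,k} − β_{j,k})²] ≤ C (ln n)/n` and
`E[(β̂_{j,k} − β_{j,k})² 1_{|β̂_{j,k} − β_{j,k}| > κ tₙ/2}] ≤ C n⁻²`
(where `tₙ = √((ln n)/n)`), one has
`Σ_{j=j_*}^{j₁} Σ_k E[(β̂_{j,k} 1_{|β̂_{j,k}| ≥ κ tₙ} − β_{j,k})²]
  ≤ C' (ln n) n^{−2s/(2s+d)}`. -/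
theorem nonlinear_estimator_detail_rate
    (d : ℕ) (hd : 1 ≤ d) (s κ C : ℝ) (hs : 0 < s) (hκ : 0 < κ) (hC : 0 < C) :
    ∃ C' : ℝ, 0 < C' ∧
      ∀ (Ω : Type u) (_ : MeasurableSpace Ω) (P : Measure Ω)
        (_ : IsProbabilityMeasure P)
        (n : ℕ), 3 ≤ n →
        ∀ (τ jstar j1 : ℤ), τ ≤ jstar → jstar ≤ j1 →
          (2 : ℝ) ^ ((jstar : ℝ) * (2 * s + d)) ≤ n →
          (n : ℝ) ^ ((d : ℝ) / (2 * s + d)) ≤ (2 : ℝ) ^ ((j1 : ℝ) * d) →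
          (2 : ℝ) ^ ((j1 : ℝ) * d) ≤ (n : ℝ) / Real.log n →
          ∀ (Λ : ℤ → Type) (instΛ : ∀ j, Fintype (Λ j))
            (β : ∀ j, Λ j → ℝ) (βhat : ∀ j, Λ j → Ω → ℝ),
            (∀ j, jstar ≤ j → j ≤ j1 →
              (Fintype.card (Λ j) : ℝ) ≤ C * (2 : ℝ) ^ ((j : ℝ) * d)) →
            (∀ j, jstar ≤ j → j ≤ j1 →
              ∑ k, (β j k) ^ 2 ≤ C * (2 : ℝ) ^ (-(2 * (j : ℝ) * s))) →
            (∀ j k, Measurable (βhat j k)) →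
            (∀ j, jstar ≤ j → j ≤ j1 → ∀ k,
              Integrable (fun ω => (βhat j k ω) ^ 2) P) →
            (∀ j, jstar ≤ j → j ≤ j1 → ∀ k,
              ∫ ω, (βhat j k ω - β j k) ^ 2 ∂P ≤ C * Real.log n / n) →
            (∀ j, jstar ≤ j → j ≤ j1 → ∀ k,
              ∫ ω, (βhat j k ω - β j k) ^ 2
                  * (if κ * Real.sqrt (Real.log n / n) / 2
                        < |βhat j k ω - β j k| then 1 else 0) ∂P
                ≤ C / (n : ℝ) ^ 2) →
            ∑ j ∈ Finset.Icc jstar j1, ∑ k,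
                ∫ ω, ((if κ * Real.sqrt (Real.log n / n) ≤ |βhat j k ω|
                        then βhat j k ω else 0) - β j k) ^ 2 ∂P
              ≤ C' * Real.log n * (n : ℝ) ^ (-(2 * s) / (2 * s + d)) := by
  have hd₀ : (0 : ℝ) < d := by exact_mod_cast hd
  have hgeo : 0 < 1 - (2 : ℝ) ^ (-(d : ℝ)) :=
    sub_pos.2 (Real.rpow_lt_one_of_one_lt_of_neg one_lt_two (by linarith))
  have hgeo_s : 0 < 1 - (2 : ℝ) ^ (-(2 * s)) :=
    sub_pos.2 (Real.rpow_lt_one_of_one_lt_of_neg one_lt_two (by linarith))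
  have hθ : 2 * s / (2 * s + d) ≤ 1 := (div_le_one (by positivity)).2 (by linarith)
  set θ := 2 * s / (2 * s + d)
  set K := 4 * (C / κ ^ 2) + 9 / 4
  set G := 1 / (1 - (2 : ℝ) ^ (-(d : ℝ))) + 1 / (1 - (2 : ℝ) ^ (-(2 * s)))
  refine ⟨9 * C ^ 2 / (1 - 2 ^ (-(d : ℝ))) + K * C * (G * (κ ^ 2) ^ θ), by positivity, ?_⟩
  intro Ω _ P _ n hn₃ τ jstar j1 _ _ _ _ hj1 Λ _ β βhat hcard hdecay hmeas hint hvar htail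
  have hn : (3 : ℝ) ≤ n := by exact_mod_cast hn₃
  have hL : 1 ≤ Real.log n := by
    rw [Real.le_log_iff_exp_le (by positivity)]; linarith [Real.exp_one_lt_d9]
  set t := κ * √(Real.log n / n)
  have ht2 : t ^ 2 = κ ^ 2 * (Real.log n / n) := by rw [mul_pow, Real.sq_sqrt (by positivity)]
  calc _ ≤ ∑ j ∈ Icc jstar j1, (C * 2 ^ ((j : ℝ) * d) * (9 * (C / n ^ 2))
        + K * C * min ((2 : ℝ) ^ (-(2 * (j : ℝ) * s))) (2 ^ ((j : ℝ) * d) * t ^ 2)) := by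
        refine sum_le_sum fun j hj => ?_
        rw [mem_Icc] at hj
        refine sum_integral_sq_hardThreshold_sub_le (hmeas j) (hint j hj.1 hj.2) (by positivity)
          (by positivity : 0 ≤ C / κ ^ 2) (by positivity) hC.le (hcard j hj.1 hj.2)
          (hdecay j hj.1 hj.2) (fun k => (hvar j hj.1 hj.2 k).trans_eq ?_) (htail j hj.1 hj.2)
        rw [ht2]; field_simp
    _ = C * (∑ j ∈ Icc jstar j1, (2 : ℝ) ^ ((j : ℝ) * d)) * (9 * (C / n ^ 2))
        + K * C * ∑ j ∈ Icc jstar j1,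
          min ((2 : ℝ) ^ (-(2 * (j : ℝ) * s))) (2 ^ ((j : ℝ) * d) * t ^ 2) := by
        rw [sum_add_distrib, ← sum_mul, ← mul_sum, ← mul_sum]
    _ ≤ C * (n / Real.log n / (1 - 2 ^ (-(d : ℝ)))) * (9 * (C / n ^ 2))
        + K * C * (G * (κ ^ 2 * (Real.log n / n)) ^ θ) := by
        rw [← ht2]
        gcongr
        · exact (sum_Icc_rpow_mul_le_of_pos one_lt_two hd₀ jstar j1).trans (by gcongr)
        · exact sum_Icc_min_two_rpow_le_rpow hs hd₀ (by positivity) jstar j1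
    _ = 9 * C ^ 2 / (1 - 2 ^ (-(d : ℝ))) * (n / Real.log n / n ^ 2)
        + K * C * (G * (κ ^ 2 * (Real.log n / n)) ^ θ) := by ring
    _ ≤ 9 * C ^ 2 / (1 - 2 ^ (-(d : ℝ))) * (Real.log n * n ^ (-θ))
        + K * C * (G * ((κ ^ 2) ^ θ * Real.log n * n ^ (-θ))) := by
        gcongr
        · exact div_log_div_sq_le_log_mul_rpow (by linarith) hL hθ
        · exact rpow_mul_log_div_le (by positivity) hL hθ (by positivity)
    _ = _ := by rw [neg_div]; ring
end
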